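/- arXiv:2012.15620 — 5 statements merged into one kernel-verified Lean document; each statement's English description precedes it below -/
import Mathlib

section
/- Let D ∈ Div(H) be a divisor whose support is contained in V(G) ⊆ V(H). Then: (i) for every function f : V(G) → ℤ, the divisor D + div_ℓ(f) is G-admissible and linearly equivalent to D on H; (ii) every G-admissible divisor D′ on H that is linearly equivalent to D is of the form D + div_ℓ(f) for some f : V(G) → ℤ. -/
open Finset
open scoped Classical

structure Multigraph (V E : Type) where
  tail : E → V
  head : E → V
  loopless : ∀ e, tail e ≠ head e

namespace Multigraph

variable {V E : Type}

/-- The simple graph of adjacency underlying a multigraph. -/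
def adjG (G : Multigraph V E) : SimpleGraph V :=
  SimpleGraph.fromRel (fun u v => ∃ e, G.tail e = u ∧ G.head e = v)

/-- A multigraph is connected if its adjacency graph is. -/
def Conn (G : Multigraph V E) : Prop := G.adjG.Connected

end Multigraph

variable {V E : Type} [Fintype V] [Fintype E] [DecidableEq V] [DecidableEq E]

/-- The vertex set of the subdivision `H` of `G`: the vertices of `G` together with,
for each edge `e`, the `ℓ e − 1` interior vertices `x_1^e, …, x_{ℓ_e − 1}^e` of the
subdivision of `e` (the pair `⟨e, j⟩` encodes `x_{j+1}^e`, indexed along the reference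
orientation of `e`). -/
abbrev VH (V E : Type) (ℓ : E → ℕ) := V ⊕ (Σ e : E, Fin (ℓ e - 1))

/-- The vertex `x_j^e` of `H` (along the reference orientation of `e`),
for `0 ≤ j ≤ ℓ e`. -/
def xv (G : Multigraph V E) (ℓ : E → ℕ) (e : E) (j : ℕ) : VH V E ℓ :=
  if h : j = 0 then Sum.inl (G.tail e)
  else if h2 : j < ℓ e then Sum.inr ⟨e, ⟨j - 1, by omega⟩⟩
  else Sum.inl (G.head e)

/-- The principal divisor `div(F)` on `H` of a function `F : V(H) → ℤ`; its value at a
vertex `w` is `ord_w(F) = Σ (F(u) − F(w))`, the sum being over the edges of `H` between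
`u` and `w`. The edges of `H` are the pairs `{x_j^e, x_{j+1}^e}` for `0 ≤ j < ℓ e`. -/
def divH (G : Multigraph V E) (ℓ : E → ℕ) (F : VH V E ℓ → ℤ) (w : VH V E ℓ) : ℤ :=
  ∑ e : E, ∑ j ∈ Finset.range (ℓ e),
    ((if xv G ℓ e j = w then F (xv G ℓ e (j + 1)) - F (xv G ℓ e j) else 0) +
     (if xv G ℓ e (j + 1) = w then F (xv G ℓ e j) - F (xv G ℓ e (j + 1)) else 0))

/-- A divisor `D` on `H` is `G`-admissible if, for every edge `e` of `G`, `D` vanishes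
at all interior vertices of the subdivision of `e`, except at most one where it
takes the value `1`. -/
def GAdm (G : Multigraph V E) (ℓ : E → ℕ) (D : VH V E ℓ → ℤ) : Prop :=
  ∀ e : E,
    (∀ j : Fin (ℓ e - 1), D (Sum.inr ⟨e, j⟩) = 0) ∨
    (∃ j : Fin (ℓ e - 1), D (Sum.inr ⟨e, j⟩) = 1 ∧
      ∀ j' : Fin (ℓ e - 1), j' ≠ j → D (Sum.inr ⟨e, j'⟩) = 0)

/-- The principal `G`-admissible divisor `div_ℓ(f)` on `H` associated to
`f : V(G) → ℤ`: at a vertex `u` of `G` its value is `Σ δ_e(f)` over the oriented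
edges `e` with tail `u`, where `δ_e(f) = ⌊(f(head e) − f(tail e))/ℓ_e⌋`; for each
oriented edge `e = uv` with `ℓ_e ∤ f(v) − f(u)` it takes the value `1` at
`x_{r_e}^{ē} = x_{ℓ_e − r_e}^{e}`, where `r_e` is the remainder of the Euclidean
division of `f(v) − f(u)` by `ℓ_e`; and it vanishes at every other vertex. -/
def divell (G : Multigraph V E) (ℓ : E → ℕ) (f : V → ℤ) : VH V E ℓ → ℤ := fun w =>
  match w with
  | Sum.inl u =>
      (∑ e : E, if G.tail e = u then Int.fdiv (f (G.head e) - f (G.tail e)) (ℓ e : ℤ) else 0) +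
      (∑ e : E, if G.head e = u then Int.fdiv (f (G.tail e) - f (G.head e)) (ℓ e : ℤ) else 0)
  | Sum.inr p =>
      if Int.fmod (f (G.head p.1) - f (G.tail p.1)) (ℓ p.1 : ℤ) ≠ 0 ∧
         ((p.2 : ℕ) + 1 : ℤ) + Int.fmod (f (G.head p.1) - f (G.tail p.1)) (ℓ p.1 : ℤ) = (ℓ p.1 : ℤ)
      then 1 else 0

/-!
Along a subdivided edge of length `L`, the divisor of `F : V(H) → ℤ` at the interior vertices
is the sequence of second differences of `F`. So, for `D` supported on `V(G)`, `D + div F` is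
`G`-admissible exactly when the slopes of `F` along every edge form a step sequence: `q` on the
first `L - r` segments and `q + 1` on the last `r`, with `0 ≤ r < L`. Such a sequence sums to
`q L + r`, so `q` and `r` are the quotient and remainder of the total increase of `F` along
the edge, and then `div F = div_ℓ (F|V(G))`; this is (ii). For (i), extend `f` to `H` with
exactly these slopes.
-/

theorem sum_range_eq_of_eq_add_ite {L r : ℕ} {q : ℤ} {s : ℕ → ℤ} (hr : r ≤ L)
    (hs : ∀ j < L, s j = q + if L ≤ j + r then 1 else 0) : ∑ j ∈ range L, s j = q * L + r := by
  have hfilter : {j ∈ range L | L ≤ j + r} = Ico (L - r) L := by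
    ext j; simp only [mem_filter, mem_range, mem_Ico]; omega
  rw [sum_congr rfl fun j hj => hs j (mem_range.1 hj), sum_add_distrib, sum_const, card_range,
    sum_boole, hfilter, Nat.card_Ico, Nat.sub_sub_self hr, nsmul_eq_mul]
  ring

theorem Int.fdiv_fmod_mul_add {b q r : ℤ} (hr₀ : 0 ≤ r) (hrb : r < b) :
    (q * b + r).fdiv b = q ∧ (q * b + r).fmod b = r := by
  rw [Int.fdiv_eq_ediv_of_nonneg _ (by omega), Int.fmod_eq_emod_of_nonneg _ (by omega)]
  exact (Int.ediv_emod_unique (by omega)).2 ⟨by ring, hr₀, hrb⟩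

def IsStepSeq (L : ℕ) (s : ℕ → ℤ) : Prop :=
  ∃ (q : ℤ) (r : ℕ), r < L ∧ ∀ j < L, s j = q + if L ≤ j + r then 1 else 0

namespace IsStepSeq

variable {L : ℕ} {s t : ℕ → ℤ}

theorem congr (h : IsStepSeq L s) (hst : ∀ j < L, s j = t j) : IsStepSeq L t := by
  obtain ⟨q, r, hr, hs⟩ := h
  exact ⟨q, r, hr, fun j hj => hst j hj ▸ hs j hj⟩

theorem of_sub_eq_ite {r : ℕ} (hr : r < L)
    (h : ∀ j, j + 1 < L → s (j + 1) - s j = if j + 1 + r = L then 1 else 0) :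
    IsStepSeq L s := by
  refine ⟨s 0, r, hr, fun j hj => ?_⟩
  induction j with
  | zero => rw [if_neg (by omega), add_zero]
  | succ j ih =>
    rw [← sub_add_cancel (s (j + 1)) (s j), h j hj, ih (by omega)]
    split_ifs <;> omega

theorem of_admissible (hL : 0 < L)
    (h : (∀ j : Fin (L - 1), s (j + 1) - s j = 0) ∨
      ∃ j : Fin (L - 1), s (j + 1) - s j = 1 ∧ ∀ j' : Fin (L - 1), j' ≠ j → s (j' + 1) - s j' = 0) :
    IsStepSeq L s := by
  rcases h with hzero | ⟨j₀, hj₀, hzero⟩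
  · refine of_sub_eq_ite (r := 0) hL fun j hj => ?_
    rw [hzero ⟨j, by omega⟩, if_neg (by omega)]
  · refine of_sub_eq_ite (r := L - 1 - j₀) (by omega) fun j hj => ?_
    by_cases hj : j = j₀
    · subst hj; rw [hj₀, if_pos (by omega)]
    · rw [hzero ⟨j, by omega⟩ (fun h => hj (congrArg Fin.val h)), if_neg (by omega)]

theorem fdiv_sum (h : IsStepSeq L s) : (∑ j ∈ range L, s j).fdiv L = s 0 := by
  obtain ⟨q, r, hr, hs⟩ := h
  rw [sum_range_eq_of_eq_add_ite hr.le hs, hs 0 (by omega), if_neg (by omega), add_zero]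
  exact (Int.fdiv_fmod_mul_add (by omega) (by omega)).1

theorem fdiv_neg_sum (h : IsStepSeq L s) : (-∑ j ∈ range L, s j).fdiv L = -s (L - 1) := by
  obtain ⟨q, r, hr, hs⟩ := h
  rw [sum_range_eq_of_eq_add_ite hr.le hs, hs (L - 1) (by omega)]
  rcases Nat.eq_zero_or_pos r with rfl | hr₀
  · rw [if_neg (by omega), show -(q * L + ((0 : ℕ) : ℤ)) = -q * L + 0 by push_cast; ring,
      (Int.fdiv_fmod_mul_add le_rfl (by omega)).1, add_zero]
  · rw [if_pos (by omega), show -(q * L + (r : ℤ)) = (-q - 1) * L + (L - r) by ring,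
      (Int.fdiv_fmod_mul_add (by omega) (by omega)).1]
    ring

theorem sub_eq_ite_fmod_sum (h : IsStepSeq L s) {i : ℕ} (hi : i + 1 < L) :
    s (i + 1) - s i =
      if (∑ j ∈ range L, s j).fmod L ≠ 0 ∧ (i + 1 : ℤ) + (∑ j ∈ range L, s j).fmod L = L
      then 1 else 0 := by
  obtain ⟨q, r, hr, hs⟩ := h
  rw [sum_range_eq_of_eq_add_ite hr.le hs, (Int.fdiv_fmod_mul_add (by omega) (by omega)).2,
    hs i (by omega), hs (i + 1) hi]
  split_ifs <;> omega

end IsStepSeq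

def stepSeq (L : ℕ) (d : ℤ) (j : ℕ) : ℤ :=
  d / L + if L ≤ j + (d % L).toNat then 1 else 0

theorem isStepSeq_stepSeq {L : ℕ} (hL : 0 < L) (d : ℤ) : IsStepSeq L (stepSeq L d) :=
  ⟨d / L, (d % L).toNat, by have := Int.emod_lt_of_pos d (by omega : (0 : ℤ) < L); omega,
    fun _ _ => rfl⟩

theorem sum_range_stepSeq {L : ℕ} (hL : 0 < L) (d : ℤ) : ∑ j ∈ range L, stepSeq L d j = d := by
  have h₀ := Int.emod_nonneg d (by omega : (L : ℤ) ≠ 0)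
  have h₁ := Int.emod_lt_of_pos d (by omega : (0 : ℤ) < L)
  rw [sum_range_eq_of_eq_add_ite (s := stepSeq L d) (by omega) fun _ _ => rfl,
    Int.toNat_of_nonneg h₀]
  linear_combination Int.ediv_mul_add_emod d L

section Subdivision

variable {V E : Type} (G : Multigraph V E) (ℓ : E → ℕ)

def edgeSlope (F : VH V E ℓ → ℤ) (e : E) (j : ℕ) : ℤ :=
  F (xv G ℓ e (j + 1)) - F (xv G ℓ e j)

theorem xv_zero (e : E) : xv G ℓ e 0 = Sum.inl (G.tail e) := rfl

theorem xv_of_lt {e : E} {j : ℕ} (hj₀ : j ≠ 0) (hj : j < ℓ e) :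
    xv G ℓ e j = Sum.inr ⟨e, ⟨j - 1, by omega⟩⟩ := by
  rw [xv, dif_neg hj₀, dif_pos hj]

theorem xv_length {e : E} (he : 0 < ℓ e) : xv G ℓ e (ℓ e) = Sum.inl (G.head e) := by
  rw [xv, dif_neg he.ne', dif_neg (lt_irrefl _)]

theorem xv_eq_inr_iff {e e' : E} {i : Fin (ℓ e - 1)} {j : ℕ} :
    xv G ℓ e' j = Sum.inr ⟨e, i⟩ ↔ e' = e ∧ j = i + 1 := by
  unfold xv
  split_ifs with hj₀ hj
  · simp only [false_iff, not_and]
    intro _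
    omega
  · simp only [Sum.inr.injEq, Sigma.mk.injEq]
    constructor
    · rintro ⟨rfl, h⟩
      have := congrArg Fin.val (eq_of_heq h)
      simp only at this
      exact ⟨rfl, by omega⟩
    · rintro ⟨rfl, rfl⟩
      simp
  · simp only [false_iff, not_and]
    rintro rfl; omega

theorem xv_eq_inl_iff {e : E} {j : ℕ} (hj : j < ℓ e) {u : V} :
    xv G ℓ e j = Sum.inl u ↔ j = 0 ∧ G.tail e = u := by
  unfold xv
  split_ifs with hj₀ <;> simp [*]

theorem xv_succ_eq_inl_iff {e : E} {j : ℕ} (hj : j < ℓ e) {u : V} :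
    xv G ℓ e (j + 1) = Sum.inl u ↔ j = ℓ e - 1 ∧ G.head e = u := by
  rw [xv, dif_neg j.succ_ne_zero]
  split_ifs with hj₁
  · simp only [false_iff, not_and]
    intro _
    omega
  · simp only [Sum.inl.injEq, show j = ℓ e - 1 by omega, true_and]

theorem sum_edgeSlope (F : VH V E ℓ → ℤ) {e : E} (he : 0 < ℓ e) :
    ∑ j ∈ range (ℓ e), edgeSlope G ℓ F e j = F (Sum.inl (G.head e)) - F (Sum.inl (G.tail e)) := by
  unfold edgeSlope
  rw [sum_range_sub (fun j => F (xv G ℓ e j)), xv_length G ℓ he, xv_zero]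

theorem gAdm_congr {D D' : VH V E ℓ → ℤ} (h : ∀ p, D (Sum.inr p) = D' (Sum.inr p)) :
    GAdm G ℓ D ↔ GAdm G ℓ D' := by
  simp only [GAdm, h]

def stepExtension (f : V → ℤ) : VH V E ℓ → ℤ
  | Sum.inl u => f u
  | Sum.inr ⟨e, i⟩ =>
      f (G.tail e) + ∑ k ∈ range (i + 1), stepSeq (ℓ e) (f (G.head e) - f (G.tail e)) k

theorem stepExtension_xv (f : V → ℤ) {e : E} (he : 0 < ℓ e) {j : ℕ} (hj : j ≤ ℓ e) :
    stepExtension G ℓ f (xv G ℓ e j) =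
      f (G.tail e) + ∑ k ∈ range j, stepSeq (ℓ e) (f (G.head e) - f (G.tail e)) k := by
  rcases Nat.eq_zero_or_pos j with rfl | hj₀
  · simp [xv_zero, stepExtension]
  rcases hj.lt_or_eq with hj | rfl
  · rw [xv_of_lt G ℓ hj₀.ne' hj, stepExtension, Nat.sub_add_cancel hj₀]
  · rw [xv_length G ℓ he, sum_range_stepSeq he, stepExtension]
    ring

theorem edgeSlope_stepExtension (f : V → ℤ) {e : E} {j : ℕ} (hj : j < ℓ e) :
    edgeSlope G ℓ (stepExtension G ℓ f) e j = stepSeq (ℓ e) (f (G.head e) - f (G.tail e)) j := by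
  rw [edgeSlope, stepExtension_xv G ℓ f (by omega) hj, stepExtension_xv G ℓ f (by omega) hj.le,
    sum_range_succ]
  ring

theorem gAdm_divell [Fintype E] [DecidableEq V] (hℓ : ∀ e, 0 < ℓ e) (f : V → ℤ) :
    GAdm G ℓ (divell G ℓ f) := by
  intro e
  have hL : (0 : ℤ) < ℓ e := by exact_mod_cast hℓ e
  have hr₀ := Int.fmod_nonneg_of_pos (f (G.head e) - f (G.tail e)) hL
  have hr₁ := Int.fmod_lt_of_pos (f (G.head e) - f (G.tail e)) hL
  by_cases hr : Int.fmod (f (G.head e) - f (G.tail e)) (ℓ e) = 0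
  · left
    intro j
    simp [divell, hr]
  · right
    refine ⟨⟨ℓ e - 1 - (Int.fmod (f (G.head e) - f (G.tail e)) (ℓ e)).toNat, by omega⟩, ?_,
      fun j hj => ?_⟩
    · simp only [divell]
      rw [if_pos ⟨hr, by omega⟩]
    · simp only [divell]
      rw [if_neg]
      rintro ⟨-, h⟩
      exact hj (Fin.ext (by simp only; omega))

end Subdivision

section Divisors

variable {V E : Type} [Fintype E] [DecidableEq V] [DecidableEq E] (G : Multigraph V E)
  (ℓ : E → ℕ)

theorem divH_eq_sum_edgeSlope (F : VH V E ℓ → ℤ) (w : VH V E ℓ) :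
    divH G ℓ F w = ∑ e : E, ∑ j ∈ range (ℓ e),
      ((if xv G ℓ e j = w then edgeSlope G ℓ F e j else 0) -
        if xv G ℓ e (j + 1) = w then edgeSlope G ℓ F e j else 0) := by
  unfold divH edgeSlope
  refine sum_congr rfl fun e _ => sum_congr rfl fun j _ => ?_
  split_ifs <;> ring

theorem divH_inr (F : VH V E ℓ → ℤ) (e : E) (i : Fin (ℓ e - 1)) :
    divH G ℓ F (Sum.inr ⟨e, i⟩) = edgeSlope G ℓ F e (i + 1) - edgeSlope G ℓ F e i := by
  have hi₁ : (i : ℕ) + 1 < ℓ e := by omega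
  have hi₀ : (i : ℕ) < ℓ e := by omega
  simp [divH_eq_sum_edgeSlope, xv_eq_inr_iff, ite_and, sum_sub_distrib, hi₀, hi₁]

theorem divH_inl (hℓ : ∀ e, 0 < ℓ e) (F : VH V E ℓ → ℤ) (u : V) :
    divH G ℓ F (Sum.inl u) = ∑ e : E,
      ((if G.tail e = u then edgeSlope G ℓ F e 0 else 0) -
        if G.head e = u then edgeSlope G ℓ F e (ℓ e - 1) else 0) := by
  rw [divH_eq_sum_edgeSlope]
  refine sum_congr rfl fun e _ => ?_
  simp (disch := exact mem_range.1 ‹_›) only [xv_succ_eq_inl_iff, xv_eq_inl_iff]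
  simp [ite_and, sum_sub_distrib, hℓ e]

theorem divH_eq_divell (hℓ : ∀ e, 0 < ℓ e) {F : VH V E ℓ → ℤ}
    (hF : ∀ e, IsStepSeq (ℓ e) (edgeSlope G ℓ F e)) :
    divH G ℓ F = divell G ℓ (fun u => F (Sum.inl u)) := by
  funext w
  rcases w with u | ⟨e, i⟩
  · rw [divH_inl G ℓ hℓ, divell, ← sum_add_distrib]
    refine sum_congr rfl fun e _ => ?_
    rw [← neg_sub (F (Sum.inl (G.head e))), ← sum_edgeSlope G ℓ F (hℓ e), (hF e).fdiv_sum,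
      (hF e).fdiv_neg_sum]
    split_ifs <;> ring
  · rw [divH_inr, divell, ← sum_edgeSlope G ℓ F (hℓ e)]
    exact (hF e).sub_eq_ite_fmod_sum (by omega)

theorem isStepSeq_edgeSlope_of_gAdm (hℓ : ∀ e, 0 < ℓ e) {F : VH V E ℓ → ℤ}
    (h : GAdm G ℓ (divH G ℓ F)) (e : E) : IsStepSeq (ℓ e) (edgeSlope G ℓ F e) :=
  IsStepSeq.of_admissible (hℓ e) (by simpa only [divH_inr] using h e)

theorem divH_stepExtension (hℓ : ∀ e, 0 < ℓ e) (f : V → ℤ) :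
    divH G ℓ (stepExtension G ℓ f) = divell G ℓ f :=
  divH_eq_divell G ℓ hℓ fun e =>
    (isStepSeq_stepSeq (hℓ e) _).congr fun _ hj => (edgeSlope_stepExtension G ℓ f hj).symm

end Divisors

theorem stmt0_general (G : Multigraph V E) (ℓ : E → ℕ) (hℓ : ∀ e, 0 < ℓ e)
    (D : VH V E ℓ → ℤ) (hD : ∀ p : Σ e : E, Fin (ℓ e - 1), D (Sum.inr p) = 0) :
    (∀ f : V → ℤ,
      GAdm G ℓ (fun w => D w + divell G ℓ f w) ∧
      ∃ F : VH V E ℓ → ℤ, ∀ w, D w + divell G ℓ f w = D w + divH G ℓ F w) ∧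
    (∀ D' : VH V E ℓ → ℤ, GAdm G ℓ D' →
      (∃ F : VH V E ℓ → ℤ, ∀ w, D' w = D w + divH G ℓ F w) →
      ∃ f : V → ℤ, ∀ w, D' w = D w + divell G ℓ f w) := by
  refine ⟨fun f => ⟨?_, stepExtension G ℓ f, fun w => by rw [divH_stepExtension G ℓ hℓ f]⟩, ?_⟩
  · exact (gAdm_congr G ℓ fun p => by rw [hD, zero_add]).2 (gAdm_divell G ℓ hℓ f)
  · rintro D' hD' ⟨F, hF⟩
    have hF_adm : GAdm G ℓ (divH G ℓ F) :=
      (gAdm_congr G ℓ fun p => by rw [hF, hD, zero_add]).1 hD'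
    refine ⟨fun u => F (Sum.inl u), fun w => ?_⟩
    rw [hF, divH_eq_divell G ℓ hℓ (isStepSeq_edgeSlope_of_gAdm G ℓ hℓ hF_adm)]

/-- let `D` be a divisor on `H` supported on `V(G)`. Then
(i) for every `f : V(G) → ℤ`, the divisor `D + div_ℓ(f)` is `G`-admissible and
linearly equivalent to `D` on `H`; (ii) every `G`-admissible divisor `D'` linearly
equivalent to `D` on `H` is of the form `D + div_ℓ(f)` for some `f : V(G) → ℤ`. -/
theorem stmt0 (G : Multigraph V E) (hG : G.Conn) (ℓ : E → ℕ) (hℓ : ∀ e, 0 < ℓ e)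
    (D : VH V E ℓ → ℤ) (hD : ∀ p : Σ e : E, Fin (ℓ e - 1), D (Sum.inr p) = 0) :
    (∀ f : V → ℤ,
      GAdm G ℓ (fun w => D w + divell G ℓ f w) ∧
      ∃ F : VH V E ℓ → ℤ, ∀ w, D w + divell G ℓ f w = D w + divH G ℓ F w) ∧
    (∀ D' : VH V E ℓ → ℤ, GAdm G ℓ D' →
      (∃ F : VH V E ℓ → ℤ, ∀ w, D' w = D w + divH G ℓ F w) →
      ∃ f : V → ℤ, ∀ w, D' w = D w + divell G ℓ f w) :=
  stmt0_general G ℓ hℓ D hD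
end

section
/- For every divisor D on H and every function f : V(G) → ℤ, there exists a unique function f̃ : V(H) → ℤ extending f such that D + div(f̃) is a G-admissible divisor on H. -/
open Finset
open scoped Classical

variable {V E : Type} [Fintype V] [Fintype E] [DecidableEq V] [DecidableEq E]

namespace Stmt1Aux

/-- Admissibility of a sequence `d` on positions `1,…,n-1`. -/
def AdmSeq (n : ℕ) (d : ℕ → ℤ) : Prop :=
  (∀ k, k < n - 1 → d (k + 1) = 0) ∨
  ∃ k, k < n - 1 ∧ d (k + 1) = 1 ∧ ∀ k', k' < n - 1 → k' ≠ k → d (k' + 1) = 0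

/-- The path problem. -/
def PathP (n : ℕ) (a b : ℤ) (c : ℕ → ℤ) (s : ℕ → ℤ) : Prop :=
  s 0 = a ∧ (∀ k, n ≤ k → s k = b) ∧
  AdmSeq n (fun m => c m + s (m - 1) - 2 * s m + s (m + 1))

variable (n : ℕ) (a b : ℤ) (c : ℕ → ℤ)

def Cval : ℤ := (b - a) + ∑ i ∈ range (n - 1), ((n - 1 - i : ℕ) : ℤ) * c (i + 1)

def qv : ℤ := Cval n a b c / n

def rv : ℕ := (Cval n a b c % n).toNat

def dv : ℕ → ℤ := fun m => if 0 < rv n a b c ∧ m = n - rv n a b c then 1 else 0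

def sol : ℕ → ℤ := fun k =>
  a + ((min k n : ℕ) : ℤ) * qv n a b c +
    ∑ i ∈ range (n - 1), ((min k n - 1 - i : ℕ) : ℤ) * (dv n a b c (i + 1) - c (i + 1))

lemma rv_lt (hn : 0 < n) : rv n a b c < n := by
  have h1 : Cval n a b c % n < n := Int.emod_lt_of_pos _ (by exact_mod_cast hn)
  have h2 : 0 ≤ Cval n a b c % n := Int.emod_nonneg _ (by exact_mod_cast hn.ne')
  unfold rv; omega

lemma rv_cast (hn : 0 < n) : (rv n a b c : ℤ) = Cval n a b c % n := by
  have h2 : 0 ≤ Cval n a b c % n := Int.emod_nonneg _ (by exact_mod_cast hn.ne')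
  unfold rv; omega

lemma key_qr (hn : 0 < n) : (n : ℤ) * qv n a b c + rv n a b c = Cval n a b c := by
  rw [rv_cast n a b c hn, qv]
  exact Int.mul_ediv_add_emod _ _

lemma sum_dv (hn : 0 < n) :
    ∑ i ∈ range (n - 1), ((n - 1 - i : ℕ) : ℤ) * dv n a b c (i + 1) = rv n a b c := by
  by_cases hr : 0 < rv n a b c
  · have hlt := rv_lt n a b c hn
    have hmem : n - rv n a b c - 1 ∈ range (n - 1) := by simp only [mem_range]; omega
    rw [Finset.sum_eq_single_of_mem _ hmem]
    · have hd1 : dv n a b c (n - rv n a b c - 1 + 1) = 1 := by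
        simp only [dv, if_pos (show 0 < rv n a b c ∧ n - rv n a b c - 1 + 1 = n - rv n a b c
          from ⟨hr, by omega⟩)]
      rw [hd1]
      have : n - 1 - (n - rv n a b c - 1) = rv n a b c := by omega
      rw [this, mul_one]
    · intro i hi hne
      have hd0 : dv n a b c (i + 1) = 0 := by
        simp only [dv, ite_eq_right_iff]
        rintro ⟨_, h⟩
        exfalso; apply hne; simp only [mem_range] at hi; omega
      rw [hd0, mul_zero]
  · have hr0 : rv n a b c = 0 := by omega
    simp only [dv, hr0, lt_irrefl, false_and, if_false, mul_zero, Finset.sum_const_zero]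
    simp [hr0]

lemma sol_zero : sol n a b c 0 = a := by
  simp [sol]

lemma sol_ge (hn : 0 < n) (k : ℕ) (hk : n ≤ k) : sol n a b c k = b := by
  have hmin : min k n = n := by omega
  simp only [sol, hmin]
  have hs : ∑ i ∈ range (n - 1), ((n - 1 - i : ℕ) : ℤ) * (dv n a b c (i + 1) - c (i + 1))
      = (rv n a b c : ℤ) - ∑ i ∈ range (n - 1), ((n - 1 - i : ℕ) : ℤ) * c (i + 1) := by
    rw [← sum_dv n a b c hn, ← Finset.sum_sub_distrib]
    apply Finset.sum_congr rfl
    intro i _; ring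
  rw [hs]
  have hq := key_qr n a b c hn
  have hC : Cval n a b c
      = (b - a) + ∑ i ∈ range (n - 1), ((n - 1 - i : ℕ) : ℤ) * c (i + 1) := rfl
  linarith [hq, hC.ge, hC.le]

lemma sol_diff (hn : 0 < n) (k : ℕ) (hk : k < n - 1) :
    sol n a b c (k + 2) - 2 * sol n a b c (k + 1) + sol n a b c k
      = dv n a b c (k + 1) - c (k + 1) := by
  have h0 : min k n = k := by omega
  have h1 : min (k + 1) n = k + 1 := by omega
  have h2 : min (k + 2) n = k + 2 := by omega
  set K : ℕ → ℤ := fun i => dv n a b c (i + 1) - c (i + 1) with hK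
  have hmem : k ∈ range (n - 1) := by simp only [mem_range]; omega
  have hsum : ∑ i ∈ range (n - 1),
      (((k + 2 - 1 - i : ℕ) : ℤ) * K i - 2 * (((k + 1 - 1 - i : ℕ) : ℤ) * K i)
        + ((k - 1 - i : ℕ) : ℤ) * K i) = K k := by
    rw [Finset.sum_eq_single_of_mem _ hmem]
    · have c1 : ((k + 2 - 1 - k : ℕ) : ℤ) = 1 := by omega
      have c2 : ((k + 1 - 1 - k : ℕ) : ℤ) = 0 := by omega
      have c3 : ((k - 1 - k : ℕ) : ℤ) = 0 := by omega
      rw [c1, c2, c3]; ring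
    · intro i hi hne
      have hz : ((k + 2 - 1 - i : ℕ) : ℤ) - 2 * ((k + 1 - 1 - i : ℕ) : ℤ)
          + ((k - 1 - i : ℕ) : ℤ) = 0 := by omega
      linear_combination K i * hz
  have hsplit : (∑ i ∈ range (n - 1), ((k + 2 - 1 - i : ℕ) : ℤ) * K i)
      - 2 * (∑ i ∈ range (n - 1), ((k + 1 - 1 - i : ℕ) : ℤ) * K i)
      + (∑ i ∈ range (n - 1), ((k - 1 - i : ℕ) : ℤ) * K i) = K k := by
    rw [Finset.mul_sum, ← Finset.sum_sub_distrib, ← Finset.sum_add_distrib]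
    exact hsum
  simp only [sol, h0, h1, h2]
  have n1 : ((k + 1 : ℕ) : ℤ) = (k : ℤ) + 1 := by push_cast; ring
  have n2 : ((k + 2 : ℕ) : ℤ) = (k : ℤ) + 2 := by push_cast; ring
  rw [n1, n2]
  linear_combination hsplit

lemma sol_d (hn : 0 < n) (k : ℕ) (hk : k < n - 1) :
    c (k + 1) + sol n a b c (k + 1 - 1) - 2 * sol n a b c (k + 1) + sol n a b c (k + 1 + 1)
      = dv n a b c (k + 1) := by
  have h : k + 1 - 1 = k := by omega
  rw [h]
  have := sol_diff n a b c hn k hk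
  linarith

lemma sol_path (hn : 0 < n) : PathP n a b c (sol n a b c) := by
  refine ⟨sol_zero n a b c, sol_ge n a b c hn, ?_⟩
  by_cases hr : 0 < rv n a b c
  · right
    have hlt := rv_lt n a b c hn
    refine ⟨n - rv n a b c - 1, by omega, ?_, ?_⟩
    · show c _ + sol n a b c _ - 2 * sol n a b c _ + sol n a b c _ = 1
      rw [sol_d n a b c hn _ (by omega)]
      simp only [dv]
      rw [if_pos ⟨hr, by omega⟩]
    · intro k' hk' hne
      show c _ + sol n a b c _ - 2 * sol n a b c _ + sol n a b c _ = 0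
      rw [sol_d n a b c hn _ hk']
      simp only [dv, ite_eq_right_iff]
      rintro ⟨_, h⟩; exfalso; apply hne; omega
  · left
    intro k hk
    show c _ + sol n a b c _ - 2 * sol n a b c _ + sol n a b c _ = 0
    rw [sol_d n a b c hn _ hk]
    simp only [dv]
    rw [if_neg (by tauto)]

/-- Representation of a sequence via its first and second differences. -/
lemma rep (s : ℕ → ℤ) (k : ℕ) :
    s (k + 1) = s 0 + (k + 1 : ℤ) * (s 1 - s 0) +
      ∑ i ∈ range k, ((k - i : ℕ) : ℤ) * (s (i + 2) - 2 * s (i + 1) + s i) := by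
  induction k with
  | zero => simp
  | succ k ih =>
    have step : ∀ m : ℕ, s (m + 1) - s m = (s 1 - s 0) +
        ∑ i ∈ range m, (s (i + 2) - 2 * s (i + 1) + s i) := by
      intro m
      induction m with
      | zero => simp
      | succ m ihm =>
        rw [Finset.sum_range_succ]
        linarith [ihm]
    have h1 : s (k + 2) = s (k + 1) + (s 1 - s 0) +
        ∑ i ∈ range (k + 1), (s (i + 2) - 2 * s (i + 1) + s i) := by
      have := step (k + 1); linarith
    have hc : ∑ i ∈ range (k + 1), ((k + 1 - i : ℕ) : ℤ) * (s (i + 2) - 2 * s (i + 1) + s i)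
        = (∑ i ∈ range k, ((k - i : ℕ) : ℤ) * (s (i + 2) - 2 * s (i + 1) + s i))
          + ∑ i ∈ range (k + 1), (s (i + 2) - 2 * s (i + 1) + s i) := by
      have hpt : ∀ i ∈ range (k + 1), ((k + 1 - i : ℕ) : ℤ) * (s (i + 2) - 2 * s (i + 1) + s i)
          = ((k - i : ℕ) : ℤ) * (s (i + 2) - 2 * s (i + 1) + s i)
            + (s (i + 2) - 2 * s (i + 1) + s i) := by
        intro i hi
        simp only [mem_range] at hi
        have hcast : ((k + 1 - i : ℕ) : ℤ) = ((k - i : ℕ) : ℤ) + 1 := by omega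
        rw [hcast]; ring
      rw [Finset.sum_congr rfl hpt, Finset.sum_add_distrib,
        Finset.sum_range_succ (fun i => ((k - i : ℕ) : ℤ) * (s (i + 2) - 2 * s (i + 1) + s i))]
      have : ((k - k : ℕ) : ℤ) = 0 := by omega
      rw [this]; ring
    rw [hc]
    have hcast : ((k + 1 : ℕ) : ℤ) = (k : ℤ) + 1 := by push_cast; ring
    rw [hcast]
    linear_combination h1 + ih

/-- Uniqueness. -/
lemma path_unique (hn : 0 < n) (s : ℕ → ℤ) (hs : PathP n a b c s) : s = sol n a b c := by
  obtain ⟨hs0, hsb, hadm⟩ := hs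
  set d' : ℕ → ℤ := fun m => c m + s (m - 1) - 2 * s m + s (m + 1) with hd'
  have hδ : ∀ i : ℕ, s (i + 2) - 2 * s (i + 1) + s i = d' (i + 1) - c (i + 1) := by
    intro i
    simp only [hd']
    have h : i + 1 - 1 = i := by omega
    rw [h]; ring
  set R' : ℤ := ∑ i ∈ range (n - 1), ((n - 1 - i : ℕ) : ℤ) * d' (i + 1) with hR'
  -- the representation of s n
  have hrep := rep s (n - 1)
  rw [show n - 1 + 1 = n from by omega] at hrep
  rw [show ((n - 1 : ℕ) : ℤ) + 1 = (n : ℤ) from by omega] at hrep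
  have hsum' : ∑ i ∈ range (n - 1), ((n - 1 - i : ℕ) : ℤ) * (s (i + 2) - 2 * s (i + 1) + s i)
      = R' - ∑ i ∈ range (n - 1), ((n - 1 - i : ℕ) : ℤ) * c (i + 1) := by
    rw [hR', ← Finset.sum_sub_distrib]
    apply Finset.sum_congr rfl
    intro i _
    rw [hδ i]; ring
  rw [hsum', hs0, hsb n le_rfl] at hrep
  have hC : Cval n a b c
      = (b - a) + ∑ i ∈ range (n - 1), ((n - 1 - i : ℕ) : ℤ) * c (i + 1) := rfl
  have hb : (n : ℤ) * (s 1 - a) + R' = Cval n a b c := by linarith [hrep, hC.le, hC.ge]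
  have hq := key_qr n a b c hn
  have hrlt : (rv n a b c : ℤ) < n := by exact_mod_cast rv_lt n a b c hn
  have hrge : (0 : ℤ) ≤ (rv n a b c : ℤ) := Int.natCast_nonneg _
  have ht : (n : ℤ) * (s 1 - a - qv n a b c) = (rv n a b c : ℤ) - R' := by
    linear_combination hb - hq
  -- main finishing step, given the two key facts
  have final : s 1 = a + qv n a b c →
      (∀ k, k < n - 1 → d' (k + 1) = dv n a b c (k + 1)) → s = sol n a b c := by
    intro hs1 hdd
    have hsol1 : sol n a b c 1 = a + qv n a b c := by
      have hm : min 1 n = 1 := by omega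
      simp [sol, hm]
    funext k
    induction k using Nat.strong_induction_on with
    | _ k ih =>
      match k with
      | 0 => rw [hs0, sol_zero]
      | 1 => rw [hs1, hsol1]
      | (m + 2) =>
        by_cases hm : n ≤ m + 2
        · rw [hsb _ hm, sol_ge n a b c hn _ hm]
        · have hmlt : m < n - 1 := by omega
          have h1 := hdd m hmlt
          have h2 := sol_d n a b c hn m hmlt
          have h3 : d' (m + 1) = c (m + 1) + s (m + 1 - 1) - 2 * s (m + 1) + s (m + 1 + 1) := rfl
          have hme : m + 1 - 1 = m := by omega
          rw [hme] at h2 h3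
          have e1 := ih m (by omega)
          have e2 := ih (m + 1) (by omega)
          have : s (m + 1 + 1) = sol n a b c (m + 1 + 1) := by
            rw [h3] at h1
            rw [← h1] at h2
            linarith [e1, e2, h2]
          simpa using this
  -- now the case analysis on admissibility
  have hnpos : (0 : ℤ) < n := by exact_mod_cast hn
  rcases hadm with hall | ⟨j, hj, hj1, hj0⟩
  · have hR0 : R' = 0 := by
      rw [hR']
      apply Finset.sum_eq_zero
      intro i hi
      simp only [mem_range] at hi
      rw [hall i hi, mul_zero]
    have ht0 : s 1 - a - qv n a b c = 0 ∧ (rv n a b c : ℤ) = 0 := by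
      rw [hR0] at ht
      rcases lt_trichotomy (s 1 - a - qv n a b c) 0 with h | h | h
      · nlinarith
      · constructor
        · exact h
        · rw [h, mul_zero] at ht; omega
      · nlinarith
    have hrv0 : rv n a b c = 0 := by exact_mod_cast ht0.2
    apply final (by linarith [ht0.1])
    intro k hk
    rw [hall k hk]
    simp [dv, hrv0]
  · -- spike case
    have hRval : R' = ((n - 1 - j : ℕ) : ℤ) := by
      rw [hR']
      rw [Finset.sum_eq_single_of_mem j (by simp only [mem_range]; omega)]
      · rw [hj1, mul_one]
      · intro i hi hne
        simp only [mem_range] at hi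
        rw [hj0 i hi hne, mul_zero]
    have hjb : 1 ≤ n - 1 - j ∧ n - 1 - j ≤ n - 1 := by omega
    have hRb : (1 : ℤ) ≤ R' ∧ R' < n := by
      constructor
      · rw [hRval]; exact_mod_cast hjb.1
      · rw [hRval]
        have : n - 1 - j < n := by omega
        exact_mod_cast this
    have ht0 : s 1 - a - qv n a b c = 0 ∧ (rv n a b c : ℤ) = R' := by
      rcases lt_trichotomy (s 1 - a - qv n a b c) 0 with h | h | h
      · nlinarith [hRb.1, hRb.2]
      · constructor
        · exact h
        · rw [h, mul_zero] at ht; omega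
      · nlinarith [hRb.1, hRb.2]
    have hrvv : rv n a b c = n - 1 - j := by
      have : (rv n a b c : ℤ) = ((n - 1 - j : ℕ) : ℤ) := by rw [ht0.2, hRval]
      exact_mod_cast this
    apply final (by linarith [ht0.1])
    intro k hk
    have hnsub : n - rv n a b c = j + 1 := by omega
    by_cases hkj : k = j
    · subst hkj
      rw [hj1]
      simp only [dv, hrvv]
      rw [if_pos ⟨by omega, by omega⟩]
    · rw [hj0 k hk hkj]
      simp only [dv, hrvv, hnsub]
      rw [if_neg (by omega)]

theorem path_exu (hn : 0 < n) : ∃! s : ℕ → ℤ, PathP n a b c s :=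
  ⟨sol n a b c, sol_path n a b c hn, fun s hs => path_unique n a b c hn s hs⟩


variable {V E : Type} [Fintype V] [Fintype E] [DecidableEq V] [DecidableEq E]

lemma adm_transfer (n : ℕ) (P : Fin (n - 1) → ℤ) (g : ℕ → ℤ)
    (h : ∀ j : Fin (n - 1), P j = g (j.val + 1)) :
    ((∀ j, P j = 0) ∨ (∃ j, P j = 1 ∧ ∀ j', j' ≠ j → P j' = 0)) ↔ AdmSeq n g := by
  constructor
  · rintro (hall | ⟨j, hj1, hj0⟩)
    · left; intro k hk
      rw [← h ⟨k, hk⟩]; exact hall _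
    · right
      refine ⟨j.val, j.isLt, by rw [← h j]; exact hj1, ?_⟩
      intro k' hk' hne
      rw [← h ⟨k', hk'⟩]
      exact hj0 _ (fun hc => hne (congrArg Fin.val hc))
  · rintro (hall | ⟨k, hk, hk1, hk0⟩)
    · left; intro j
      rw [h j]; exact hall _ j.isLt
    · right
      refine ⟨⟨k, hk⟩, by rw [h ⟨k, hk⟩]; exact hk1, ?_⟩
      intro j' hne
      rw [h j']
      exact hk0 _ j'.isLt (fun hc => hne (Fin.ext hc))

/-- The boundary values of `D` along the interior of the edge `e`. -/
def cfun (ℓ : E → ℕ) (D : VH V E ℓ → ℤ) (e : E) : ℕ → ℤ := fun m =>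
  if h : 0 < m ∧ m - 1 < ℓ e - 1 then D (Sum.inr ⟨e, ⟨m - 1, h.2⟩⟩) else 0

lemma cfun_eq (ℓ : E → ℕ) (D : VH V E ℓ → ℤ) (e : E) (j : Fin (ℓ e - 1)) :
    cfun ℓ D e (j.val + 1) = D (Sum.inr ⟨e, j⟩) := by
  unfold cfun
  rw [dif_pos (⟨Nat.succ_pos _, j.isLt⟩ : 0 < j.val + 1 ∧ j.val + 1 - 1 < ℓ e - 1)]
  have hfin : (⟨j.val + 1 - 1, by omega⟩ : Fin (ℓ e - 1)) = j := Fin.ext (show j.val + 1 - 1 = j.val by omega)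
  exact congrArg (fun x : Fin (ℓ e - 1) => D (Sum.inr ⟨e, x⟩)) hfin

section
variable (G : Multigraph V E) (ℓ : E → ℕ)

lemma xv_tail (e : E) : xv G ℓ e 0 = Sum.inl (G.tail e) := by simp [xv]

lemma xv_head (e : E) (k : ℕ) (hℓ : 0 < ℓ e) (hk : ℓ e ≤ k) :
    xv G ℓ e k = Sum.inl (G.head e) := by
  unfold xv
  rw [dif_neg (by omega), dif_neg (by omega)]

lemma xv_int (e : E) (k : ℕ) (h0 : 0 < k) (h1 : k < ℓ e) :
    xv G ℓ e k = Sum.inr ⟨e, ⟨k - 1, by omega⟩⟩ := by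
  unfold xv
  rw [dif_neg (by omega), dif_pos h1]

lemma xv_eq_inr (e' e : E) (k : ℕ) (j : Fin (ℓ e - 1)) :
    xv G ℓ e' k = Sum.inr ⟨e, j⟩ ↔ e' = e ∧ k = j.val + 1 := by
  constructor
  · intro h
    unfold xv at h
    split_ifs at h with h1 h2
    rw [Sum.inr.injEq, Sigma.mk.inj_iff] at h
    obtain ⟨rfl, hj⟩ := h
    have hfe := eq_of_heq hj
    have hv : k - 1 = j.val := congrArg Fin.val hfe
    exact ⟨rfl, by omega⟩
  · rintro ⟨rfl, rfl⟩
    have hlt : j.val + 1 < ℓ e' := by have := j.isLt; omega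
    rw [xv_int G ℓ e' _ (Nat.succ_pos _) hlt]
    have hfin : (⟨j.val + 1 - 1, by omega⟩ : Fin (ℓ e' - 1)) = j := Fin.ext (show j.val + 1 - 1 = j.val by omega)
    exact congrArg (fun x : Fin (ℓ e' - 1) => (Sum.inr ⟨e', x⟩ : VH V E ℓ)) hfin

lemma divH_int (F : VH V E ℓ → ℤ) (e : E) (j : Fin (ℓ e - 1)) :
    divH G ℓ F (Sum.inr ⟨e, j⟩) =
      F (xv G ℓ e j.val) - 2 * F (xv G ℓ e (j.val + 1)) + F (xv G ℓ e (j.val + 2)) := by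
  unfold divH
  have hj1 : j.val + 1 < ℓ e := by have := j.isLt; omega
  rw [Finset.sum_eq_single_of_mem e (Finset.mem_univ e)]
  · have hcg : ∀ k ∈ Finset.range (ℓ e),
        ((if xv G ℓ e k = Sum.inr ⟨e, j⟩ then F (xv G ℓ e (k + 1)) - F (xv G ℓ e k) else 0) +
         (if xv G ℓ e (k + 1) = Sum.inr ⟨e, j⟩ then F (xv G ℓ e k) - F (xv G ℓ e (k + 1)) else 0))
        = ((if k = j.val + 1 then F (xv G ℓ e (k + 1)) - F (xv G ℓ e k) else 0) +
           (if k = j.val then F (xv G ℓ e k) - F (xv G ℓ e (k + 1)) else 0)) := by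
      intro k _
      have h1 : (xv G ℓ e k = Sum.inr ⟨e, j⟩) ↔ (k = j.val + 1) := by
        rw [xv_eq_inr]; simp
      have h2 : (xv G ℓ e (k + 1) = Sum.inr ⟨e, j⟩) ↔ (k = j.val) := by
        rw [xv_eq_inr]
        constructor
        · rintro ⟨-, h⟩; omega
        · rintro rfl; exact ⟨rfl, rfl⟩
      rw [if_congr h1 rfl rfl, if_congr h2 rfl rfl]
    rw [Finset.sum_congr rfl hcg, Finset.sum_add_distrib,
      Finset.sum_ite_eq' (Finset.range (ℓ e)) (j.val + 1)
        (fun k => F (xv G ℓ e (k + 1)) - F (xv G ℓ e k)),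
      Finset.sum_ite_eq' (Finset.range (ℓ e)) j.val
        (fun k => F (xv G ℓ e k) - F (xv G ℓ e (k + 1)))]
    rw [if_pos (Finset.mem_range.mpr hj1), if_pos (Finset.mem_range.mpr (by omega))]
    ring
  · intro e' _ hne
    apply Finset.sum_eq_zero
    intro k _
    have h1 : ¬ (xv G ℓ e' k = Sum.inr ⟨e, j⟩) := by
      rw [xv_eq_inr]; rintro ⟨rfl, -⟩; exact hne rfl
    have h2 : ¬ (xv G ℓ e' (k + 1) = Sum.inr ⟨e, j⟩) := by
      rw [xv_eq_inr]; rintro ⟨rfl, -⟩; exact hne rfl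
    rw [if_neg h1, if_neg h2, add_zero]

/-- Pointwise identification of `D + div F` at interior vertices with the path data. -/
lemma pt (D : VH V E ℓ → ℤ) (F : VH V E ℓ → ℤ) (e : E) (j : Fin (ℓ e - 1)) :
    D (Sum.inr ⟨e, j⟩) + divH G ℓ F (Sum.inr ⟨e, j⟩)
      = (fun m => cfun ℓ D e m + (fun k => F (xv G ℓ e k)) (m - 1)
          - 2 * (fun k => F (xv G ℓ e k)) m + (fun k => F (xv G ℓ e k)) (m + 1))
        (j.val + 1) := by
  simp only
  rw [divH_int, cfun_eq]
  have h : j.val + 1 - 1 = j.val := by omega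
  rw [h]
  ring

end
end Stmt1Aux

open Stmt1Aux in
/-- for every divisor `D` on `H` and every `f : V(G) → ℤ`, there is a
unique function `F : V(H) → ℤ` extending `f` such that `D + div(F)` is
`G`-admissible. -/
theorem stmt1 (G : Multigraph V E) (hG : G.Conn) (ℓ : E → ℕ) (hℓ : ∀ e, 0 < ℓ e)
    (D : VH V E ℓ → ℤ) (f : V → ℤ) :
    ∃! F : VH V E ℓ → ℤ,
      (∀ v : V, F (Sum.inl v) = f v) ∧
      GAdm G ℓ (fun w => D w + divH G ℓ F w) := by
  classical
  set F : VH V E ℓ → ℤ := fun w => match w with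
    | Sum.inl v => f v
    | Sum.inr ⟨e, j⟩ =>
        sol (ℓ e) (f (G.tail e)) (f (G.head e)) (cfun ℓ D e) (j.val + 1) with hFdef
  have hFv : ∀ v, F (Sum.inl v) = f v := fun v => rfl
  have hFi : ∀ (e : E) (j : Fin (ℓ e - 1)), F (Sum.inr ⟨e, j⟩)
      = sol (ℓ e) (f (G.tail e)) (f (G.head e)) (cfun ℓ D e) (j.val + 1) := fun e j => rfl
  have hsF : ∀ (e : E), (fun k => F (xv G ℓ e k))
      = sol (ℓ e) (f (G.tail e)) (f (G.head e)) (cfun ℓ D e) := by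
    intro e
    funext k
    rcases Nat.eq_zero_or_pos k with rfl | hk
    · rw [xv_tail, hFv, sol_zero]
    · by_cases hk2 : k < ℓ e
      · rw [xv_int G ℓ e k hk hk2, hFi]
        congr 1
        show k - 1 + 1 = k
        omega
      · rw [xv_head G ℓ e k (hℓ e) (by omega), hFv,
          sol_ge (ℓ e) _ _ _ (hℓ e) k (by omega)]
  refine ⟨F, ⟨hFv, ?_⟩, ?_⟩
  · intro e
    rw [adm_transfer (ℓ e) _
      (fun m => cfun ℓ D e m + (fun k => F (xv G ℓ e k)) (m - 1)
        - 2 * (fun k => F (xv G ℓ e k)) m + (fun k => F (xv G ℓ e k)) (m + 1))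
      (fun j => pt G ℓ D F e j)]
    rw [hsF e]
    exact (sol_path (ℓ e) _ _ _ (hℓ e)).2.2
  · rintro F' ⟨hF'v, hF'adm⟩
    have hP : ∀ e : E, PathP (ℓ e) (f (G.tail e)) (f (G.head e)) (cfun ℓ D e)
        (fun k => F' (xv G ℓ e k)) := by
      intro e
      refine ⟨?_, ?_, ?_⟩
      · show F' (xv G ℓ e 0) = f (G.tail e)
        rw [xv_tail]; exact hF'v _
      · intro k hk
        show F' (xv G ℓ e k) = f (G.head e)
        rw [xv_head G ℓ e k (hℓ e) hk]; exact hF'v _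
      · rw [← adm_transfer (ℓ e) _
          (fun m => cfun ℓ D e m + (fun k => F' (xv G ℓ e k)) (m - 1)
            - 2 * (fun k => F' (xv G ℓ e k)) m + (fun k => F' (xv G ℓ e k)) (m + 1))
          (fun j => pt G ℓ D F' e j)]
        exact hF'adm e
    funext w
    rcases w with v | ⟨e, j⟩
    · rw [hF'v, hFv]
    · have huniq := path_unique (ℓ e) _ _ _ (hℓ e) _ (hP e)
      have hxv : xv G ℓ e (j.val + 1) = Sum.inr ⟨e, j⟩ :=
        (xv_eq_inr G ℓ e e _ j).mpr ⟨rfl, rfl⟩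
      have h1 : F' (Sum.inr ⟨e, j⟩) = F' (xv G ℓ e (j.val + 1)) :=
        (congrArg F' hxv).symm
      have h2 := congrFun huniq (j.val + 1)
      rw [h1, h2, ← hFi e j]
end

section
/- Let β ∈ F_ℤ and η ∈ F_ℝ. Then the point β + η belongs to the Voronoi cell Vor_F(β) if and only if for every subset S ⊆ V one has −(1/2)|𝔼(S, V−S)| ≤ Σ_{e ∈ 𝔼(S, V−S)} η(e) ≤ (1/2)|𝔼(S, V−S)|. -/
open Finset
open scoped Classical

namespace Multigraph

variable {V E : Type}

/-- Tail of an oriented edge `(e, b)`. -/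
def otail (G : Multigraph V E) (oe : E × Bool) : V :=
  if oe.2 then G.tail oe.1 else G.head oe.1

/-- Head of an oriented edge `(e, b)`. -/
def ohead (G : Multigraph V E) (oe : E × Bool) : V :=
  if oe.2 then G.head oe.1 else G.tail oe.1

/-- The coboundary map `d : C⁰(G,A) → C¹(G,A)`, where `C¹(G,A)` is identified with
`E → A` via a fixed reference orientation of each edge. -/
def dm (G : Multigraph V E) {A : Type} [Ring A] (f : V → A) : E → A :=
  fun e => f (G.head e) - f (G.tail e)

end Multigraph

/-- Value of an element of `C¹(G,A)` on an oriented edge. -/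
def oval {E A : Type} [Neg A] (g : E → A) (oe : E × Bool) : A :=
  if oe.2 then g oe.1 else -g oe.1

variable {V E : Type} [Fintype V] [Fintype E] [DecidableEq V] [DecidableEq E]

/-- The cut space `F_ℝ = d(C⁰(G,ℝ)) ⊆ C¹(G,ℝ)`. -/
def FR (G : Multigraph V E) : Set (E → ℝ) := Set.range (G.dm (A := ℝ))

/-- The cut lattice `F_ℤ`, viewed inside `C¹(G,ℝ)`. -/
def FZr (G : Multigraph V E) : Set (E → ℝ) :=
  {g | ∃ f : V → ℤ, g = G.dm fun v => (f v : ℝ)}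

/-- The Euclidean norm on `C¹(G,ℝ)`. -/
noncomputable def enorm (x : E → ℝ) : ℝ := Real.sqrt (∑ e, x e ^ 2)

/-- The Voronoi cell of `β ∈ F_ℤ` inside `F_ℝ`. -/
noncomputable def VorF (G : Multigraph V E) (β : E → ℝ) : Set (E → ℝ) :=
  {x | x ∈ FR G ∧ ∀ α ∈ FZr G, _root_.enorm (x - β) ≤ _root_.enorm (x - α)}

/-- The sum of `η` over the oriented cut `𝔼(S, V−S)`. -/
def cutSum (G : Multigraph V E) (η : E → ℝ) (S : Finset V) : ℝ :=
  ∑ e : E,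
    (if G.tail e ∈ S ∧ G.head e ∉ S then η e
     else if G.head e ∈ S ∧ G.tail e ∉ S then -η e else 0)

/-- The number `|𝔼(S, V−S)|` of oriented edges from `S` to `V − S`. -/
def cutCard (G : Multigraph V E) (S : Finset V) : ℕ :=
  (univ.filter fun e : E =>
    (G.tail e ∈ S ∧ G.head e ∉ S) ∨ (G.head e ∈ S ∧ G.tail e ∉ S)).card

/-!
Since `F_ℤ` is a group, `β + η ∈ Vor_F(β)` iff `‖η‖ ≤ ‖η - γ‖`, i.e. `2⟨η, γ⟩ ≤ ‖γ‖²`, for every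
`γ ∈ F_ℤ`. For `γ = ± d χ_S` this is the cut inequality, because `⟨η, d χ_S⟩ = -Σ_{𝔼(S,V-S)} η` and
`‖d χ_S‖² = |𝔼(S,V-S)|`. Conversely, for `f : V → ℤ` with values in `[m, m + n + 1]`, peeling off
the superlevel set `T = {f > m}` writes `d f = d g + d χ_T` with `g` in `[m, m + n]`, and
`⟨d g, d χ_T⟩ ≥ 0` because `g` is larger on `T` than off it; the inequality `2⟨η, x⟩ ≤ ‖x‖²` is
stable under adding vectors with nonnegative inner product, so induction on `n` finishes.
-/

theorem enorm_le_enorm_sub_iff {ι : Type} [Fintype ι] (η γ : ι → ℝ) :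
    _root_.enorm η ≤ _root_.enorm (η - γ) ↔ 2 * (η ⬝ᵥ γ) ≤ γ ⬝ᵥ γ := by
  have hsq : ∀ x : ι → ℝ, ∑ i, x i ^ 2 = x ⬝ᵥ x := fun x => by simp only [dotProduct, sq]
  rw [_root_.enorm, _root_.enorm, Real.sqrt_le_sqrt_iff (by positivity), hsq, hsq, sub_dotProduct,
    dotProduct_sub, dotProduct_sub, dotProduct_comm γ η]
  constructor <;> intro h <;> linarith

theorem two_dotProduct_add_le {ι : Type} [Fintype ι] {η x y : ι → ℝ}
    (hx : 2 * (η ⬝ᵥ x) ≤ x ⬝ᵥ x) (hy : 2 * (η ⬝ᵥ y) ≤ y ⬝ᵥ y) (hxy : 0 ≤ x ⬝ᵥ y) :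
    2 * (η ⬝ᵥ (x + y)) ≤ (x + y) ⬝ᵥ (x + y) := by
  rw [dotProduct_add, add_dotProduct, dotProduct_add, dotProduct_add, dotProduct_comm y x]
  linarith

section CutLattice

omit [Fintype V] [Fintype E] [DecidableEq V] [DecidableEq E]

theorem Multigraph.dm_add (G : Multigraph V E) {A : Type} [Ring A] (f g : V → A) :
    G.dm (f + g) = G.dm f + G.dm g := by
  funext e
  simp only [Multigraph.dm, Pi.add_apply]
  abel

variable {G : Multigraph V E}

theorem FZr_subset_FR : FZr G ⊆ FR G := by
  rintro _ ⟨f, rfl⟩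
  exact ⟨_, rfl⟩

theorem add_mem_FR {x y : E → ℝ} (hx : x ∈ FR G) (hy : y ∈ FR G) : x + y ∈ FR G := by
  obtain ⟨f, rfl⟩ := hx
  obtain ⟨g, rfl⟩ := hy
  exact ⟨f + g, G.dm_add f g⟩

theorem add_mem_FZr {x y : E → ℝ} (hx : x ∈ FZr G) (hy : y ∈ FZr G) : x + y ∈ FZr G := by
  obtain ⟨f, rfl⟩ := hx
  obtain ⟨g, rfl⟩ := hy
  refine ⟨f + g, ?_⟩
  rw [← G.dm_add]
  simp only [Pi.add_apply, Int.cast_add]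
  rfl

theorem neg_mem_FZr {x : E → ℝ} (hx : x ∈ FZr G) : -x ∈ FZr G := by
  obtain ⟨f, rfl⟩ := hx
  refine ⟨-f, ?_⟩
  funext e
  simp only [Multigraph.dm, Pi.neg_apply, Int.cast_neg]
  ring

theorem sub_mem_FZr {x y : E → ℝ} (hx : x ∈ FZr G) (hy : y ∈ FZr G) : x - y ∈ FZr G :=
  sub_eq_add_neg x y ▸ add_mem_FZr hx (neg_mem_FZr hy)

end CutLattice

omit [Fintype V] [DecidableEq V] [DecidableEq E] in
theorem add_mem_VorF_iff {G : Multigraph V E} {β η : E → ℝ} (hβ : β ∈ FZr G) (hη : η ∈ FR G) :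
    β + η ∈ VorF G β ↔ ∀ γ ∈ FZr G, 2 * (η ⬝ᵥ γ) ≤ γ ⬝ᵥ γ := by
  simp only [VorF, Set.mem_ofPred_eq, add_sub_cancel_left,
    and_iff_right (add_mem_FR (FZr_subset_FR hβ) hη), ← enorm_le_enorm_sub_iff]
  constructor
  · intro h γ hγ
    simpa only [add_sub_add_left_eq_sub] using h (β + γ) (add_mem_FZr hβ hγ)
  · intro h α hα
    simpa only [sub_sub_eq_add_sub, add_sub_cancel_left, add_comm]
      using h (α - β) (sub_mem_FZr hα hβ)

namespace Multigraph

omit [Fintype V] [DecidableEq E]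

def cutVector (G : Multigraph V E) (S : Finset V) : E → ℝ :=
  G.dm fun v => if v ∈ S then 1 else 0

variable (G : Multigraph V E)

omit [Fintype E] in
theorem cutVector_mem_FZr (S : Finset V) : G.cutVector S ∈ FZr G :=
  ⟨fun v => if v ∈ S then 1 else 0, by
    simp only [cutVector, Int.cast_ite, Int.cast_one, Int.cast_zero]⟩

theorem dotProduct_cutVector (η : E → ℝ) (S : Finset V) :
    η ⬝ᵥ G.cutVector S = -cutSum G η S := by
  rw [cutSum, ← Finset.sum_neg_distrib]
  refine Finset.sum_congr rfl fun e _ => ?_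
  by_cases ht : G.tail e ∈ S <;> by_cases hh : G.head e ∈ S <;> simp [cutVector, dm, ht, hh]

theorem cutVector_dotProduct_self (S : Finset V) :
    G.cutVector S ⬝ᵥ G.cutVector S = cutCard G S := by
  rw [cutCard, Finset.card_filter, Nat.cast_sum]
  refine Finset.sum_congr rfl fun e _ => ?_
  by_cases ht : G.tail e ∈ S <;> by_cases hh : G.head e ∈ S <;> simp [cutVector, dm, ht, hh]

/-- On every edge crossing the cut, `d g` and `d χ_S` have the same sign. -/
theorem dm_dotProduct_cutVector_nonneg {g : V → ℝ} {S : Finset V}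
    (hg : ∀ u ∈ S, ∀ v ∉ S, g v ≤ g u) : 0 ≤ G.dm g ⬝ᵥ G.cutVector S := by
  refine Finset.sum_nonneg fun e _ => ?_
  by_cases ht : G.tail e ∈ S <;> by_cases hh : G.head e ∈ S
  · simp [cutVector, dm, ht, hh]
  · simpa [cutVector, dm, ht, hh] using hg _ ht _ hh
  · simpa [cutVector, dm, ht, hh] using hg _ hh _ ht
  · simp [cutVector, dm, ht, hh]

end Multigraph

omit [DecidableEq E] in
theorem Multigraph.two_dotProduct_dm_le_of_forall_cutVector (G : Multigraph V E) {η : E → ℝ}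
    (hcut : ∀ S, 2 * (η ⬝ᵥ G.cutVector S) ≤ G.cutVector S ⬝ᵥ G.cutVector S) (f : V → ℤ) :
    2 * (η ⬝ᵥ G.dm fun v => (f v : ℝ)) ≤ (G.dm fun v => (f v : ℝ)) ⬝ᵥ G.dm fun v => (f v : ℝ) := by
  obtain ⟨m, hm⟩ := (Set.finite_range f).bddBelow
  obtain ⟨M, hM⟩ := (Set.finite_range f).bddAbove
  suffices key : ∀ n : ℕ, ∀ f : V → ℤ, (∀ v, m ≤ f v ∧ f v ≤ m + n) →
      2 * (η ⬝ᵥ G.dm fun v => (f v : ℝ)) ≤ (G.dm fun v => (f v : ℝ)) ⬝ᵥ G.dm fun v => (f v : ℝ) from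
    key (M - m).toNat f fun v => ⟨hm ⟨v, rfl⟩, by have := hM ⟨v, rfl⟩; omega⟩
  intro n
  induction n with
  | zero =>
    intro f hf
    have hconst : ∀ v, f v = m := fun v => by have := hf v; omega
    have hzero : (G.dm fun v => (f v : ℝ)) = 0 := by
      funext e
      simp [Multigraph.dm, hconst]
    simp [hzero]
  | succ n ih =>
    intro f hf
    set T := univ.filter fun v => m < f v
    set g : V → ℤ := fun v => if m < f v then f v - 1 else f v
    have hsplit :
        (fun v => (f v : ℝ)) = (fun v => (g v : ℝ)) + fun v => if v ∈ T then 1 else 0 := by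
      funext v
      by_cases hv : m < f v <;> simp [g, T, hv]
    have hg : ∀ v, m ≤ g v ∧ g v ≤ m + n := fun v => by
      have := hf v
      simp only [g]
      split_ifs <;> omega
    have hmono : ∀ u ∈ T, ∀ v ∉ T, (g v : ℝ) ≤ g u := fun u hu v hv => by
      simp only [T, mem_filter, mem_univ, true_and] at hu hv
      have := hf v
      exact_mod_cast (show g v ≤ g u by simp only [g, if_pos hu, if_neg hv]; omega)
    rw [hsplit, G.dm_add]
    exact two_dotProduct_add_le (ih g hg) (hcut T) (G.dm_dotProduct_cutVector_nonneg hmono)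

theorem stmt8_general (G : Multigraph V E) (β : E → ℝ) (hβ : β ∈ FZr G)
    (η : E → ℝ) (hη : η ∈ FR G) :
    β + η ∈ VorF G β ↔
      ∀ S : Finset V,
        -((cutCard G S : ℝ) / 2) ≤ cutSum G η S ∧ cutSum G η S ≤ (cutCard G S : ℝ) / 2 := by
  rw [add_mem_VorF_iff hβ hη]
  constructor
  · intro h S
    have hS := h _ (G.cutVector_mem_FZr S)
    have hSc := h _ (neg_mem_FZr (G.cutVector_mem_FZr S))
    rw [dotProduct_neg, neg_dotProduct, dotProduct_neg, neg_neg] at hSc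
    rw [G.dotProduct_cutVector, G.cutVector_dotProduct_self] at hS hSc
    constructor <;> linarith
  · rintro h _ ⟨f, rfl⟩
    refine G.two_dotProduct_dm_le_of_forall_cutVector (fun S => ?_) f
    rw [G.dotProduct_cutVector, G.cutVector_dotProduct_self]
    linarith [(h S).1]

/-- for `β ∈ F_ℤ` and `η ∈ F_ℝ`, the point `β + η` belongs to the
Voronoi cell `Vor_F(β)` iff for every `S ⊆ V`,
`−|𝔼(S,V−S)|/2 ≤ Σ_{e ∈ 𝔼(S,V−S)} η_e ≤ |𝔼(S,V−S)|/2`. -/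
theorem stmt8 (G : Multigraph V E) (hG : G.Conn) (β : E → ℝ) (hβ : β ∈ FZr G)
    (η : E → ℝ) (hη : η ∈ FR G) :
    β + η ∈ VorF G β ↔
      ∀ S : Finset V,
        -((cutCard G S : ℝ) / 2) ≤ cutSum G η S ∧ cutSum G η S ≤ (cutCard G S : ℝ) / 2 :=
  stmt8_general G β hβ η hη
end

section
/- The face poset of the Voronoi cell Vor_F(O) of the origin (the set of nonempty faces of the polytope Vor_F(O), ordered by inclusion) is isomorphic, as a partially ordered set, to the poset CAC of coherent acyclic orientations of cut subgraphs of G. -/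
open Finset
open scoped Classical

variable {V E : Type} [Fintype V] [Fintype E] [DecidableEq V] [DecidableEq E]

/-- A set of oriented edges is a coherent acyclic orientation of a cut subgraph of `G`
if it is induced by an ordered partition of `V` into nonempty parts `V_0 < ⋯ < V_{k-1}`
(encoded by a surjection `P : V → Fin k`): its oriented edges are exactly those going
from a part to a strictly higher part. -/
def IsCAC (G : Multigraph V E) (D : Set (E × Bool)) : Prop :=
  ∃ (k : ℕ) (P : V → Fin k), Function.Surjective P ∧
    D = {oe : E × Bool | P (G.otail oe) < P (G.ohead oe)}

/-! The Voronoi cell of the cut lattice is a zonotope: it is the orthogonal projection onto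
the cut space `F_ℝ` of the cube `[-1/2, 1/2]^E`. The inclusion `⊇` holds because
`2⟨c, α⟩ ≤ ‖α‖₁ ≤ ‖α‖²` for `c` in the cube and `α` integral. For `⊆`, the Voronoi
inequalities for the cuts `d χ_S` give `2⟨x, d g⟩ ≤ ‖d g‖₁` for every real potential `g`,
by slicing `g` into its level sets; this is exactly the support function of the projected
cube, so Hahn–Banach applies.

Since `Vor_F(O) ⊆ F_ℝ`, every exposed face is exposed by some coboundary `d g`, and it is the
projection of the face of the cube exposed by `d g`, which is cut out by `c(e) = 1/2` on the
oriented edges `e = uv` with `g u < g v`. Faces are therefore ordered by reverse inclusion of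
these orientations, and the orientations induced by potentials are exactly the coherent
acyclic ones. -/

open Matrix

set_option linter.unusedSectionVars false

noncomputable section

section OrthogonalProjection

variable {ι : Type*} [Fintype ι] (W : Submodule ℝ (ι → ℝ))

/-- Orthogonal projection onto `W` for the dot product (`ι → ℝ` itself carries the sup norm). -/
def orthProj : (ι → ℝ) →L[ℝ] (ι → ℝ) :=
  (EuclideanSpace.equiv ι ℝ : EuclideanSpace ℝ ι →L[ℝ] (ι → ℝ)) ∘L
    (W.comap (EuclideanSpace.equiv ι ℝ).toLinearMap).starProjection ∘L
    ((EuclideanSpace.equiv ι ℝ).symm : (ι → ℝ) →L[ℝ] EuclideanSpace ℝ ι)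

lemma orthProj_mem (c : ι → ℝ) : orthProj W c ∈ W :=
  (W.comap (EuclideanSpace.equiv ι ℝ).toLinearMap).starProjection_apply_mem _

variable {W}

lemma dotProduct_orthProj_of_mem {x : ι → ℝ} (hx : x ∈ W) (c : ι → ℝ) :
    x ⬝ᵥ orthProj W c = x ⬝ᵥ c := by
  have h := (W.comap (EuclideanSpace.equiv ι ℝ).toLinearMap).starProjection_inner_eq_zero
    (WithLp.toLp 2 c) (WithLp.toLp 2 x) hx
  rw [EuclideanSpace.inner_eq_star_dotProduct] at h
  simp only [WithLp.ofLp_sub, star_trivial, dotProduct_sub] at h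
  exact (sub_eq_zero.1 h).symm

lemma orthProj_dotProduct_of_mem {x : ι → ℝ} (hx : x ∈ W) (c : ι → ℝ) :
    orthProj W c ⬝ᵥ x = c ⬝ᵥ x := by
  rw [dotProduct_comm, dotProduct_orthProj_of_mem hx, dotProduct_comm]

end OrthogonalProjection

lemma exists_dotProduct_eq {ι : Type*} [Fintype ι] (l : (ι → ℝ) →L[ℝ] ℝ) :
    ∃ w : ι → ℝ, ∀ y, l y = w ⬝ᵥ y :=
  ⟨(dotProductEquiv ℝ ι).symm l.toLinearMap, fun y => by
    rw [← dotProductEquiv_apply_apply, LinearEquiv.apply_symm_apply]; rfl⟩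

lemma abs_add_sub_add_of_monotone {φ ψ : ℝ → ℝ} (hφ : Monotone φ) (hψ : Monotone ψ)
    (a b : ℝ) : |φ b + ψ b - (φ a + ψ a)| = |φ b - φ a| + |ψ b - ψ a| := by
  rw [show φ b + ψ b - (φ a + ψ a) = (φ b - φ a) + (ψ b - ψ a) by ring, abs_add_eq_add_abs_iff]
  rcases le_total a b with h | h
  · exact Or.inl ⟨sub_nonneg.2 (hφ h), sub_nonneg.2 (hψ h)⟩
  · exact Or.inr ⟨sub_nonpos.2 (hφ h), sub_nonpos.2 (hψ h)⟩

section HalfCube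

variable {ι : Type} [Fintype ι]

def halfCube : Set (ι → ℝ) := Set.univ.pi fun _ => Set.Icc (-(1 / 2)) (1 / 2)

lemma mem_halfCube {c : ι → ℝ} : c ∈ halfCube ↔ ∀ i, |c i| ≤ 1 / 2 := by
  simp only [halfCube, Set.mem_univ_pi, Set.mem_Icc, abs_le]

/-- The face of `halfCube` on which `w ⬝ᵥ ·` is maximal, written in oriented coordinates. -/
def cubeFace (w : ι → ℝ) : Set (ι → ℝ) :=
  {c | c ∈ halfCube ∧ ∀ i, 0 < oval w i → oval c i = 1 / 2}

lemma two_mul_mul_le_abs {a : ℝ} (ha : |a| ≤ 1 / 2) (t : ℝ) : 2 * (t * a) ≤ |t| := by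
  nlinarith [le_abs_self (t * a), abs_mul t a, abs_nonneg t]

lemma two_mul_mul_eq_abs_iff {a : ℝ} (ha : |a| ≤ 1 / 2) (t : ℝ) :
    2 * (t * a) = |t| ↔ (0 < -t → -a = 1 / 2) ∧ (0 < t → a = 1 / 2) := by
  rw [abs_le] at ha
  rcases lt_trichotomy t 0 with ht | rfl | ht
  · rw [abs_of_neg ht]
    simp only [neg_pos.2 ht, ht.not_gt, true_implies, false_implies, and_true]
    constructor <;> intro h <;> nlinarith
  · simp
  · rw [abs_of_pos ht]
    simp only [neg_pos, ht.not_gt, ht, true_implies, false_implies, true_and]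
    constructor <;> intro h <;> nlinarith

lemma two_mul_dotProduct_le {c : ι → ℝ} (hc : c ∈ halfCube) (w : ι → ℝ) :
    2 * (w ⬝ᵥ c) ≤ ∑ i, |w i| := by
  rw [dotProduct, Finset.mul_sum]
  exact Finset.sum_le_sum fun i _ => two_mul_mul_le_abs (mem_halfCube.1 hc i) _

lemma two_mul_dotProduct_eq_iff {c : ι → ℝ} (hc : c ∈ halfCube) (w : ι → ℝ) :
    2 * (w ⬝ᵥ c) = ∑ i, |w i| ↔ c ∈ cubeFace w := by
  rw [dotProduct, Finset.mul_sum, Finset.sum_eq_sum_iff_of_le fun i _ =>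
    two_mul_mul_le_abs (mem_halfCube.1 hc i) _]
  simp only [Finset.mem_univ, true_implies, two_mul_mul_eq_abs_iff (mem_halfCube.1 hc _),
    cubeFace, Set.mem_ofPred_eq, hc, true_and, Prod.forall, Bool.forall_bool, oval,
    Bool.false_eq_true, if_false, if_true]

def halfSign (w : ι → ℝ) : ι → ℝ := fun i => Real.sign (w i) / 2

lemma oval_halfSign (w : ι → ℝ) (i : ι × Bool) :
    oval (halfSign w) i = Real.sign (oval w i) / 2 := by
  cases h : i.2 <;> simp [oval, halfSign, h, Real.sign_neg, neg_div]

lemma oval_halfSign_eq_half_iff (w : ι → ℝ) (i : ι × Bool) :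
    oval (halfSign w) i = 1 / 2 ↔ 0 < oval w i := by
  rw [oval_halfSign]
  rcases lt_trichotomy (oval w i) 0 with h | h | h
  · simp only [Real.sign_of_neg h, h.not_gt]; norm_num
  · simp only [h, Real.sign_zero, lt_irrefl]; norm_num
  · simp only [Real.sign_of_pos h, h]

lemma halfSign_mem_cubeFace (w : ι → ℝ) : halfSign w ∈ cubeFace w := by
  refine ⟨mem_halfCube.2 fun i => ?_, fun i => (oval_halfSign_eq_half_iff w i).2⟩
  rcases Real.sign_apply_eq (w i) with h | h | h <;> norm_num [halfSign, h]

lemma cubeFace_subset_cubeFace_iff {w₁ w₂ : ι → ℝ} :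
    cubeFace w₁ ⊆ cubeFace w₂ ↔ ∀ i, 0 < oval w₂ i → 0 < oval w₁ i :=
  ⟨fun h i hi => (oval_halfSign_eq_half_iff w₁ i).1 ((h (halfSign_mem_cubeFace w₁)).2 i hi),
    fun h _ hc => ⟨hc.1, fun i hi => hc.2 i (h i hi)⟩⟩

end HalfCube

section CutSpace

variable (G : Multigraph V E)

def dmLin : (V → ℝ) →ₗ[ℝ] (E → ℝ) where
  toFun := G.dm
  map_add' f g := funext fun e => by simp only [Multigraph.dm, Pi.add_apply]; ring
  map_smul' a f := funext fun e => by
    simp only [Multigraph.dm, Pi.smul_apply, smul_eq_mul, RingHom.id_apply]; ring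

lemma dm_add (f₁ f₂ : V → ℝ) : G.dm (f₁ + f₂) = G.dm f₁ + G.dm f₂ := (dmLin G).map_add f₁ f₂

lemma dm_smul (t : ℝ) (f : V → ℝ) : G.dm (t • f) = t • G.dm f := (dmLin G).map_smul t f

def cutProj : (E → ℝ) →L[ℝ] (E → ℝ) := orthProj (LinearMap.range (dmLin G))

lemma cutProj_mem_FR (c : E → ℝ) : cutProj G c ∈ FR G :=
  orthProj_mem (LinearMap.range (dmLin G)) c

variable {G}

lemma dotProduct_cutProj_of_mem {x : E → ℝ} (hx : x ∈ FR G) (c : E → ℝ) :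
    x ⬝ᵥ cutProj G c = x ⬝ᵥ c :=
  dotProduct_orthProj_of_mem hx c

lemma cutProj_dotProduct_of_mem {x : E → ℝ} (hx : x ∈ FR G) (c : E → ℝ) :
    cutProj G c ⬝ᵥ x = c ⬝ᵥ x :=
  orthProj_dotProduct_of_mem hx c

variable (G) in
lemma exists_dm_dotProduct_eq (l : (E → ℝ) →L[ℝ] ℝ) :
    ∃ g : V → ℝ, ∀ y ∈ FR G, l y = G.dm g ⬝ᵥ y := by
  obtain ⟨w, hw⟩ := exists_dotProduct_eq l
  obtain ⟨g, hg⟩ := cutProj_mem_FR G w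
  exact ⟨g, fun y hy => by rw [hw, hg, cutProj_dotProduct_of_mem hy]⟩

lemma mem_FR_of_mem_FZr {α : E → ℝ} (hα : α ∈ FZr G) : α ∈ FR G := by
  obtain ⟨f, rfl⟩ := hα
  exact ⟨_, rfl⟩

lemma oval_dm (f : V → ℝ) (oe : E × Bool) :
    oval (G.dm f) oe = f (G.ohead oe) - f (G.otail oe) := by
  cases h : oe.2 <;> simp [oval, Multigraph.dm, Multigraph.ohead, Multigraph.otail, h]

end CutSpace

section Voronoi

variable {G : Multigraph V E}

lemma enorm_le_enorm_iff (u w : E → ℝ) : _root_.enorm u ≤ _root_.enorm w ↔ u ⬝ᵥ u ≤ w ⬝ᵥ w := by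
  simp only [_root_.enorm, dotProduct, ← sq]
  exact Real.sqrt_le_sqrt_iff (Finset.sum_nonneg fun e _ => sq_nonneg (w e))

lemma mem_vorF_zero_iff {x : E → ℝ} :
    x ∈ VorF G 0 ↔ x ∈ FR G ∧ ∀ α ∈ FZr G, 2 * (α ⬝ᵥ x) ≤ α ⬝ᵥ α := by
  have hexp : ∀ α : E → ℝ, (x - α) ⬝ᵥ (x - α) = x ⬝ᵥ x - 2 * (α ⬝ᵥ x) + α ⬝ᵥ α := fun α => by
    simp only [sub_dotProduct, dotProduct_sub, dotProduct_comm x α]; ring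
  simp only [VorF, Set.mem_ofPred_eq, sub_zero, enorm_le_enorm_iff, hexp]
  exact and_congr_right fun _ => forall₂_congr fun α _ => by constructor <;> intro h <;> linarith

lemma sum_abs_le_dotProduct_self {α : E → ℝ} (hα : α ∈ FZr G) : ∑ e, |α e| ≤ α ⬝ᵥ α := by
  obtain ⟨f, rfl⟩ := hα
  refine Finset.sum_le_sum fun e _ => ?_
  have h := Int.natAbs_le_self_sq (f (G.head e) - f (G.tail e))
  rw [Int.natCast_natAbs, sq] at h
  simp only [Multigraph.dm]
  exact_mod_cast h

lemma cutProj_image_halfCube_subset : cutProj G '' halfCube ⊆ VorF G 0 := by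
  rintro _ ⟨c, hc, rfl⟩
  refine mem_vorF_zero_iff.2 ⟨cutProj_mem_FR G c, fun α hα => ?_⟩
  rw [dotProduct_cutProj_of_mem (mem_FR_of_mem_FZr hα)]
  exact (two_mul_dotProduct_le hc α).trans (sum_abs_le_dotProduct_self hα)

lemma dm_indicator_mem_FZr (S : Set V) : G.dm (S.indicator 1 : V → ℝ) ∈ FZr G :=
  ⟨(S.indicator 1 : V → ℤ), congrArg G.dm <| funext fun v => by by_cases hv : v ∈ S <;> simp [hv]⟩

lemma dotProduct_self_dm_indicator (S : Set V) :
    G.dm (S.indicator 1 : V → ℝ) ⬝ᵥ G.dm (S.indicator 1) = ∑ e, |G.dm (S.indicator 1) e| :=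
  Finset.sum_congr rfl fun e _ => by
    by_cases h₁ : G.head e ∈ S <;> by_cases h₂ : G.tail e ∈ S <;> simp [Multigraph.dm, h₁, h₂]

lemma two_mul_dm_dotProduct_le_add {x : E → ℝ} {φ ψ : ℝ → ℝ} (hφ : Monotone φ)
    (hψ : Monotone ψ) {g : V → ℝ}
    (h₁ : 2 * (G.dm (φ ∘ g) ⬝ᵥ x) ≤ ∑ e, |G.dm (φ ∘ g) e|)
    (h₂ : 2 * (G.dm (ψ ∘ g) ⬝ᵥ x) ≤ ∑ e, |G.dm (ψ ∘ g) e|) :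
    2 * (G.dm (φ ∘ g + ψ ∘ g) ⬝ᵥ x) ≤ ∑ e, |G.dm (φ ∘ g + ψ ∘ g) e| := by
  have habs : ∀ e, |G.dm (φ ∘ g + ψ ∘ g) e| = |G.dm (φ ∘ g) e| + |G.dm (ψ ∘ g) e| := fun e =>
    abs_add_sub_add_of_monotone hφ hψ (g (G.tail e)) (g (G.head e))
  rw [Finset.sum_congr rfl fun e _ => habs e, Finset.sum_add_distrib, dm_add, add_dotProduct]
  linarith

lemma two_mul_dm_dotProduct_le_smul {x : E → ℝ} {f : V → ℝ}
    (h : 2 * (G.dm f ⬝ᵥ x) ≤ ∑ e, |G.dm f e|) {t : ℝ} (ht : 0 ≤ t) :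
    2 * (G.dm (t • f) ⬝ᵥ x) ≤ ∑ e, |G.dm (t • f) e| := by
  simp only [dm_smul, smul_dotProduct, Pi.smul_apply, smul_eq_mul, abs_mul, abs_of_nonneg ht,
    ← Finset.mul_sum]
  nlinarith

/-- Induction on the set of values of `g`: slicing at the second highest value `c` writes `g`
as `min g c` plus a nonnegative multiple of a cut potential, both monotone in `g`. -/
lemma two_mul_dm_dotProduct_le_of_cuts {x : E → ℝ}
    (hcut : ∀ S : Set V, 2 * (G.dm (S.indicator 1) ⬝ᵥ x) ≤ ∑ e, |G.dm (S.indicator 1) e|)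
    (g : V → ℝ) : 2 * (G.dm g ⬝ᵥ x) ≤ ∑ e, |G.dm g e| := by
  have hconst : ∀ g : V → ℝ, (∀ u v, g u = g v) → 2 * (G.dm g ⬝ᵥ x) ≤ ∑ e, |G.dm g e| := by
    intro g hg
    have : G.dm g = 0 := funext fun e => sub_eq_zero.2 (hg _ _)
    simp [this]
  suffices H : ∀ T : Finset ℝ, ∀ g : V → ℝ, (∀ v, g v ∈ T) →
      2 * (G.dm g ⬝ᵥ x) ≤ ∑ e, |G.dm g e| from
    H _ g fun v => Finset.mem_image_of_mem g (Finset.mem_univ v)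
  intro T
  induction T using Finset.induction_on_max with
  | empty => exact fun g hg => hconst g fun u => absurd (hg u) (Finset.notMem_empty _)
  | insert a T hlt ih =>
    intro g hg
    rcases T.eq_empty_or_nonempty with rfl | hT
    · refine hconst g fun u v => ?_
      have hu := hg u
      have hv := hg v
      simp only [insert_empty_eq, Finset.mem_singleton] at hu hv
      rw [hu, hv]
    set c := T.max' hT
    have hca : c < a := hlt c (T.max'_mem hT)
    have hgc : ∀ v, g v ≠ a → g v ≤ c := fun v hv =>
      T.le_max' _ ((Finset.mem_insert.1 (hg v)).resolve_left hv)
    have hsplit : g = (min · c) ∘ g + (fun t => max (t - c) 0) ∘ g := funext fun v => by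
      rcases le_total (g v) c with h | h <;> simp [h]
    have hlow : ∀ v, min (g v) c ∈ T := fun v => by
      by_cases hv : g v = a
      · simpa [hv, hca.le] using T.max'_mem hT
      · simpa [hgc v hv] using (Finset.mem_insert.1 (hg v)).resolve_left hv
    have htop : (fun t => max (t - c) 0) ∘ g = (a - c) • {v | c < g v}.indicator 1 :=
      funext fun v => by
        by_cases hv : c < g v
        · have : g v = a := by_contra fun h => (hgc v h).not_gt hv
          simp [this, hca, hca.le]
        · simp [hv, not_lt.1 hv]
    rw [hsplit]
    refine two_mul_dm_dotProduct_le_add (fun _ _ h => min_le_min_right c h)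
      (fun _ _ h => max_le_max_right 0 (sub_le_sub_right h c)) (ih _ hlow) ?_
    rw [htop]
    exact two_mul_dm_dotProduct_le_smul (hcut _) (sub_pos.2 hca).le

lemma two_mul_dm_dotProduct_le {x : E → ℝ} (hx : x ∈ VorF G 0) (g : V → ℝ) :
    2 * (G.dm g ⬝ᵥ x) ≤ ∑ e, |G.dm g e| :=
  two_mul_dm_dotProduct_le_of_cuts (fun S => dotProduct_self_dm_indicator (G := G) S ▸
    (mem_vorF_zero_iff.1 hx).2 _ (dm_indicator_mem_FZr S)) g

lemma two_mul_dm_dotProduct_cutProj_halfSign (g : V → ℝ) :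
    2 * (G.dm g ⬝ᵥ cutProj G (halfSign (G.dm g))) = ∑ e, |G.dm g e| := by
  rw [dotProduct_cutProj_of_mem ⟨g, rfl⟩, two_mul_dotProduct_eq_iff (halfSign_mem_cubeFace _).1]
  exact halfSign_mem_cubeFace _

lemma vorF_subset_cutProj_image_halfCube : VorF G 0 ⊆ cutProj G '' halfCube := by
  intro x hx
  by_contra hxC
  have hconv : Convex ℝ (cutProj G '' halfCube) :=
    (convex_pi fun _ _ => convex_Icc _ _).linear_image (cutProj G).toLinearMap
  have hclosed : IsClosed (cutProj G '' halfCube) :=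
    ((isCompact_univ_pi fun _ => isCompact_Icc).image (cutProj G).continuous).isClosed
  obtain ⟨l, u, hlu, hux⟩ := geometric_hahn_banach_closed_point hconv hclosed hxC
  obtain ⟨g, hl⟩ := exists_dm_dotProduct_eq G l
  have hc := hlu _ ⟨halfSign (G.dm g), (halfSign_mem_cubeFace _).1, rfl⟩
  rw [hl _ (cutProj_mem_FR G _)] at hc
  rw [hl x (mem_vorF_zero_iff.1 hx).1] at hux
  linarith [two_mul_dm_dotProduct_le hx g, two_mul_dm_dotProduct_cutProj_halfSign (G := G) g]

end Voronoi

section Faces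

def vorFace (G : Multigraph V E) (g : V → ℝ) : Set (E → ℝ) :=
  {x | x ∈ VorF G 0 ∧ ∀ y ∈ VorF G 0, G.dm g ⬝ᵥ y ≤ G.dm g ⬝ᵥ x}

def orientationOf (G : Multigraph V E) (g : V → ℝ) : Set (E × Bool) :=
  {oe | g (G.otail oe) < g (G.ohead oe)}

variable {G : Multigraph V E}

lemma isExposed_vorFace (g : V → ℝ) : IsExposed ℝ (VorF G 0) (vorFace G g) :=
  fun _ => ⟨LinearMap.toContinuousLinearMap (dotProductEquiv ℝ E (G.dm g)), rfl⟩

lemma cutProj_mem_vorFace_iff {c : E → ℝ} (hc : c ∈ halfCube) (g : V → ℝ) :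
    cutProj G c ∈ vorFace G g ↔ c ∈ cubeFace (G.dm g) := by
  have hpc : cutProj G c ∈ VorF G 0 := cutProj_image_halfCube_subset ⟨c, hc, rfl⟩
  rw [← two_mul_dotProduct_eq_iff hc, ← dotProduct_cutProj_of_mem ⟨g, rfl⟩]
  constructor
  · rintro ⟨-, h⟩
    have := h _ (cutProj_image_halfCube_subset ⟨_, (halfSign_mem_cubeFace (G.dm g)).1, rfl⟩)
    linarith [two_mul_dm_dotProduct_cutProj_halfSign (G := G) g, two_mul_dm_dotProduct_le hpc g]
  · intro h
    exact ⟨hpc, fun y hy => by linarith [two_mul_dm_dotProduct_le hy g]⟩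

lemma vorFace_nonempty (g : V → ℝ) : (vorFace G g).Nonempty :=
  ⟨_, (cutProj_mem_vorFace_iff (halfSign_mem_cubeFace _).1 g).2 (halfSign_mem_cubeFace _)⟩

lemma vorFace_subset_vorFace_iff_cubeFace_subset {g₁ g₂ : V → ℝ} :
    vorFace G g₁ ⊆ vorFace G g₂ ↔ cubeFace (G.dm g₁) ⊆ cubeFace (G.dm g₂) := by
  constructor
  · intro h c hc
    exact (cutProj_mem_vorFace_iff hc.1 g₂).1 (h ((cutProj_mem_vorFace_iff hc.1 g₁).2 hc))
  · intro h x hx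
    obtain ⟨c, hc, rfl⟩ := vorF_subset_cutProj_image_halfCube hx.1
    exact (cutProj_mem_vorFace_iff hc g₂).2 (h ((cutProj_mem_vorFace_iff hc g₁).1 hx))

lemma exists_eq_vorFace {B : Set (E → ℝ)} (hB : B.Nonempty) (hexp : IsExposed ℝ (VorF G 0) B) :
    ∃ g : V → ℝ, B = vorFace G g := by
  obtain ⟨l, rfl⟩ := hexp hB
  obtain ⟨g, hl⟩ := exists_dm_dotProduct_eq G l
  refine ⟨g, Set.ext fun x => and_congr_right fun hx => forall₂_congr fun y hy => ?_⟩
  rw [hl x (mem_vorF_zero_iff.1 hx).1, hl y (mem_vorF_zero_iff.1 hy).1]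

lemma vorFace_subset_vorFace_iff {g₁ g₂ : V → ℝ} :
    vorFace G g₁ ⊆ vorFace G g₂ ↔ orientationOf G g₂ ⊆ orientationOf G g₁ := by
  simp only [vorFace_subset_vorFace_iff_cubeFace_subset, cubeFace_subset_cubeFace_iff, oval_dm,
    sub_pos]
  rfl

lemma isCAC_iff_exists_eq_orientationOf {D : Set (E × Bool)} :
    IsCAC G D ↔ ∃ g : V → ℝ, D = orientationOf G g := by
  constructor
  · rintro ⟨k, P, -, rfl⟩
    exact ⟨fun v => (P v : ℝ), Set.ext fun _ => Fin.lt_def.trans (Nat.cast_lt (α := ℝ)).symm⟩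
  · rintro ⟨g, rfl⟩
    set s := Finset.univ.image g
    have hs : ∀ v, g v ∈ s := fun v => Finset.mem_image_of_mem g (Finset.mem_univ v)
    let σ : Fin s.card ≃o s := s.orderIsoOfFin rfl
    refine ⟨s.card, fun v => σ.symm ⟨g v, hs v⟩, fun i => ?_, ?_⟩
    · obtain ⟨v, -, hv⟩ := Finset.mem_image.1 (σ i).2
      exact ⟨v, by simp only [hv, Subtype.coe_eta, OrderIso.symm_apply_apply]⟩
    · exact Set.ext fun _ => (σ.symm.lt_iff_lt.trans Subtype.mk_lt_mk).symm

end Faces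

section CAC

variable {G : Multigraph V E}

/-- Any potential inducing `D` exposes the same face. -/
def cacFace (D : {D : Set (E × Bool) // IsCAC G D}) :
    {B : Set (E → ℝ) // B.Nonempty ∧ IsExposed ℝ (VorF G 0) B} :=
  ⟨vorFace G (isCAC_iff_exists_eq_orientationOf.1 D.2).choose, vorFace_nonempty _,
    isExposed_vorFace _⟩

lemma cacFace_subset_cacFace_iff (D₁ D₂ : {D : Set (E × Bool) // IsCAC G D}) :
    (cacFace D₁).1 ⊆ (cacFace D₂).1 ↔ D₂.1 ⊆ D₁.1 := by
  rw [cacFace, cacFace, vorFace_subset_vorFace_iff,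
    ← (isCAC_iff_exists_eq_orientationOf.1 D₁.2).choose_spec,
    ← (isCAC_iff_exists_eq_orientationOf.1 D₂.2).choose_spec]

lemma cacFace_bijective : Function.Bijective (cacFace (G := G)) := by
  refine ⟨fun D₁ D₂ h => Subtype.ext ?_, fun B => ?_⟩
  · exact ((cacFace_subset_cacFace_iff D₂ D₁).1 h.ge).antisymm
      ((cacFace_subset_cacFace_iff D₁ D₂).1 h.le)
  · obtain ⟨g, hg⟩ := exists_eq_vorFace B.2.1 B.2.2
    let D : {D : Set (E × Bool) // IsCAC G D} :=
      ⟨orientationOf G g, isCAC_iff_exists_eq_orientationOf.2 ⟨g, rfl⟩⟩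
    have hD := (isCAC_iff_exists_eq_orientationOf.1 D.2).choose_spec
    refine ⟨D, Subtype.ext ?_⟩
    rw [hg]
    exact (vorFace_subset_vorFace_iff.2 hD.le).antisymm (vorFace_subset_vorFace_iff.2 hD.ge)

end CAC

end

theorem stmt10_general (G : Multigraph V E) :
    ∃ φ : {B : Set (E → ℝ) // B.Nonempty ∧ IsExposed ℝ (VorF G 0) B} ≃
          {D : Set (E × Bool) // IsCAC G D},
      ∀ a b, a.1 ⊆ b.1 ↔ (φ b).1 ⊆ (φ a).1 := by
  let φ := (Equiv.ofBijective _ (cacFace_bijective (G := G))).symm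
  refine ⟨φ, fun a b => ?_⟩
  simpa only [φ, Equiv.ofBijective_apply_symm_apply] using cacFace_subset_cacFace_iff (φ a) (φ b)

/-- Theorem A: the poset of nonempty faces of the Voronoi cell
`Vor_F(O)`, ordered by inclusion, is isomorphic to the poset `CAC` of coherent acyclic
orientations of cut subgraphs of `G`, ordered by `D₁ ⪯ D₂ ↔ 𝔼(D₂) ⊆ 𝔼(D₁)`. -/
theorem stmt10 (G : Multigraph V E) (hG : G.Conn) :
    ∃ φ : {B : Set (E → ℝ) // B.Nonempty ∧ IsExposed ℝ (VorF G 0) B} ≃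
          {D : Set (E × Bool) // IsCAC G D},
      ∀ a b, a.1 ⊆ b.1 ↔ (φ b).1 ⊆ (φ a).1 :=
  stmt10_general G
end

section
/- Let 𝔠 be a generalized cut of G with underlying ordered partition V₁, …, V_s, and for each j let c_j denote the number of connected components of the induced subgraph G[V_j]. Then s − 1 ≤ κ(𝔠) ≤ (Σ_{j=1}^{s} c_j) − 1. -/
/-!
Let `n(S)` be the number of components of `G[S]`. If no edge joins `S \ T` to `T \ S`, then
`n(S) + n(T) ≤ n(S ∩ T) + n(S ∪ T)`. For `S = {P ≤ i}` and `T = {P ≥ i}` in the connected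
graph `G` this reads `l i + g i ≤ c i + 1`, where `l i = n{P ≤ i}`, `g i = n{P ≥ i}` and
`c i = n{P = i}`. As `g 0 = l (s - 1) = 1` and `r i = g (i + 1)`, summing over `i` telescopes
to `κ + 1 ≤ Σ c_j`. The lower bound holds because every term `l i + r i - 1` is positive.
-/

open Finset
open scoped Classical

lemma sum_range_add_sub_one_add_one_le (l g c : ℕ → ℕ) (hl : ∀ i, 1 ≤ l i) (hg0 : g 0 = 1)
    (hlgc : ∀ i, l i + g i ≤ c i + 1) (n : ℕ) :
    ∑ i ∈ range n, (l i + g (i + 1) - 1) + 1 ≤ ∑ i ∈ range n, c i + g n := by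
  induction n with
  | zero => simp [hg0]
  | succ n ih =>
    rw [sum_range_succ, sum_range_succ]
    have := hl n
    have := hlgc n
    omega

lemma Multigraph.le_add_one_of_adjG {V E : Type} (G : Multigraph V E) {f : V → ℕ}
    (hf : ∀ e, f (G.tail e) ≤ f (G.head e) + 1 ∧ f (G.head e) ≤ f (G.tail e) + 1) :
    ∀ u v, G.adjG.Adj u v → f u ≤ f v + 1 := by
  rintro u v ⟨-, ⟨e, rfl, rfl⟩ | ⟨e, rfl, rfl⟩⟩
  exacts [(hf e).1, (hf e).2]

namespace SimpleGraph

variable {V : Type*} {H : SimpleGraph V}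

noncomputable def inducedComponentCount (H : SimpleGraph V) (S : Set V) : ℕ :=
  Nat.card (H.induce S).ConnectedComponent

def componentsAdjacentTo (H : SimpleGraph V) (B : Set V) (y : V) :
    Set (H.induce B).ConnectedComponent :=
  {c | ∃ u ∈ c.supp, H.Adj y u}

section Insert

variable {B : Set V} {y : V}

lemma walk_induce_insert_cases : ∀ {p q : ↥(insert y B)}
    (_ : (H.induce (insert y B)).Walk p q) (hp : (p : V) ∈ B),
    (∃ hq : (q : V) ∈ B, (H.induce B).connectedComponentMk ⟨p, hp⟩ =
        (H.induce B).connectedComponentMk ⟨q, hq⟩) ∨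
      (H.induce B).connectedComponentMk ⟨p, hp⟩ ∈ H.componentsAdjacentTo B y
  | _, _, .nil, hp => .inl ⟨hp, rfl⟩
  | p, _, .cons (v := r) hpr w, hp => by
    by_cases hr : (r : V) ∈ B
    · have hpr' : (H.induce B).connectedComponentMk ⟨p, hp⟩ =
          (H.induce B).connectedComponentMk ⟨r, hr⟩ :=
        ConnectedComponent.sound (Adj.reachable (G := H.induce B) hpr)
      rw [hpr']
      exact walk_induce_insert_cases w hr
    · have hry : (r : V) = y := (Set.mem_insert_iff.mp r.2).resolve_right hr
      have hyp : H.Adj r p := hpr.symm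
      rw [hry] at hyp
      exact .inr ⟨⟨p, hp⟩, rfl, hyp⟩

lemma map_insert_eq_mk_iff {c : (H.induce B).ConnectedComponent} (hy : y ∉ B) :
    c.map (H.induceHomOfLE (Set.subset_insert y B)).toHom =
        (H.induce (insert y B)).connectedComponentMk ⟨y, Set.mem_insert y B⟩ ↔
      c ∈ H.componentsAdjacentTo B y := by
  induction c using ConnectedComponent.ind with | h b => ?_
  constructor
  · intro hby
    obtain ⟨w⟩ := ConnectedComponent.exact hby
    exact (walk_induce_insert_cases w b.2).resolve_left fun ⟨hyB, _⟩ => hy hyB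
  · rintro ⟨u, hu, hyu⟩
    rw [ConnectedComponent.mem_supp_iff] at hu
    rw [← hu]
    exact ConnectedComponent.sound (Adj.reachable (G := H.induce (insert y B)) hyu.symm)

lemma injOn_map_insert :
    Set.InjOn (ConnectedComponent.map (H.induceHomOfLE (Set.subset_insert y B)).toHom)
      (H.componentsAdjacentTo B y)ᶜ := by
  intro c hc c' _ hcc'
  induction c using ConnectedComponent.ind with | h b => ?_
  induction c' using ConnectedComponent.ind with | h b' => ?_
  obtain ⟨w⟩ := ConnectedComponent.exact hcc'
  obtain ⟨_, hbb'⟩ | hadj := walk_induce_insert_cases w b.2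
  · exact hbb'
  · exact absurd hadj hc

lemma image_map_insert (hy : y ∉ B) :
    ConnectedComponent.map (H.induceHomOfLE (Set.subset_insert y B)).toHom ''
        (H.componentsAdjacentTo B y)ᶜ =
      {(H.induce (insert y B)).connectedComponentMk ⟨y, Set.mem_insert y B⟩}ᶜ := by
  ext d
  constructor
  · rintro ⟨c, hc, rfl⟩
    exact (map_insert_eq_mk_iff hy).not.mpr hc
  · intro hxy
    induction d using ConnectedComponent.ind with | h x => ?_
    have hxB : (x : V) ∈ B := by
      rcases Set.mem_insert_iff.mp x.2 with hx | hx
      · exact absurd (congrArg _ (Subtype.ext hx)) hxy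
      · exact hx
    refine ⟨(H.induce B).connectedComponentMk ⟨x, hxB⟩, fun hadj => hxy ?_, rfl⟩
    exact (map_insert_eq_mk_iff hy).mpr hadj

/-- Adding `y` merges all the components adjacent to it, together with `y`, into one. -/
lemma inducedComponentCount_insert_add_ncard [Finite V] (hy : y ∉ B) :
    H.inducedComponentCount (insert y B) + (H.componentsAdjacentTo B y).ncard =
      H.inducedComponentCount B + 1 := by
  have hcard := (injOn_map_insert (H := H) (B := B) (y := y)).ncard_image
  rw [image_map_insert hy, Set.ncard_compl, Set.ncard_compl, Set.ncard_singleton] at hcard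
  have hpos : 0 < H.inducedComponentCount (insert y B) := Nat.card_pos
  have hle : (H.componentsAdjacentTo B y).ncard ≤ H.inducedComponentCount B :=
    Set.ncard_le_card _
  unfold inducedComponentCount at *
  omega

end Insert

lemma ncard_componentsAdjacentTo_le [Finite V] {B B' : Set V} {y : V} (hBB' : B ⊆ B')
    (hnbr : ∀ u ∈ B', H.Adj y u → u ∈ B) :
    (H.componentsAdjacentTo B' y).ncard ≤ (H.componentsAdjacentTo B y).ncard := by
  refine (Set.ncard_le_ncard ?_).trans
    (Set.ncard_image_le (f := ConnectedComponent.map (H.induceHomOfLE hBB').toHom))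
  rintro c' ⟨u, hu, hyu⟩
  have huB : (u : V) ∈ B := hnbr u u.2 hyu
  exact ⟨_, ⟨⟨u, huB⟩, rfl, hyu⟩, (ConnectedComponent.mem_supp_iff _ _).mp hu⟩

/-- Move the vertices of `T \ S` into `S` one at a time: each move costs `S` at most as many
components as it costs `S ∩ T`, since the neighbours of the moved vertex in `S` lie in `T`. -/
theorem inducedComponentCount_add_le [Finite V] {S T : Set V}
    (hST : ∀ u ∈ S \ T, ∀ v ∈ T \ S, ¬ H.Adj u v) :
    H.inducedComponentCount S + H.inducedComponentCount T ≤
      H.inducedComponentCount (S ∩ T) + H.inducedComponentCount (S ∪ T) := by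
  induction hn : (T \ S).ncard generalizing S with
  | zero =>
    have hTS : T ⊆ S := Set.sdiff_eq_empty.mp ((Set.ncard_eq_zero).mp hn)
    rw [Set.inter_eq_right.mpr hTS, Set.union_eq_left.mpr hTS, add_comm]
  | succ n ih =>
    obtain ⟨y, hyT, hyS⟩ : (T \ S).Nonempty := Set.nonempty_of_ncard_ne_zero (by omega)
    have hdiff : T \ insert y S = (T \ S) \ {y} := by
      ext x
      simp only [Set.mem_sdiff, Set.mem_insert_iff, Set.mem_singleton_iff]
      tauto
    have hsep : ∀ u ∈ insert y S \ T, ∀ v ∈ T \ insert y S, ¬ H.Adj u v := by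
      rintro u ⟨rfl | huS, huT⟩ v ⟨hvT, hvS⟩
      · exact absurd hyT huT
      · exact hST u ⟨huS, huT⟩ v ⟨hvT, fun h => hvS (Set.mem_insert_of_mem y h)⟩
    have hmoved := ih hsep (by
      rw [hdiff, Set.ncard_sdiff_singleton_of_mem (show y ∈ T \ S from ⟨hyT, hyS⟩), hn,
        Nat.add_sub_cancel])
    rw [Set.insert_inter_of_mem hyT, Set.insert_union,
      Set.insert_eq_of_mem (Set.mem_union_right S hyT)] at hmoved
    have hS := inducedComponentCount_insert_add_ncard (H := H) hyS
    have hST' := inducedComponentCount_insert_add_ncard (H := H) (B := S ∩ T)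
      (fun h => hyS h.1)
    have hadj := ncard_componentsAdjacentTo_le (H := H) (y := y) Set.inter_subset_left
      (fun u hu hyu => ⟨hu, by_contra fun huT => hST u ⟨hu, huT⟩ y ⟨hyT, hyS⟩ hyu.symm⟩)
    omega

lemma Connected.inducedComponentCount_univ (hH : H.Connected) :
    H.inducedComponentCount Set.univ = 1 := by
  rw [inducedComponentCount, Nat.card_congr (induceUnivIso H).connectedComponentEquiv,
    Nat.card_eq_one_iff_unique]
  exact ⟨hH.preconnected.subsingleton_connectedComponent,
    ⟨H.connectedComponentMk hH.nonempty.some⟩⟩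

lemma one_le_inducedComponentCount [Finite V] {S : Set V} (hS : S.Nonempty) :
    1 ≤ H.inducedComponentCount S :=
  have : Nonempty (H.induce S).ConnectedComponent :=
    ⟨(H.induce S).connectedComponentMk ⟨_, hS.some_mem⟩⟩
  Nat.card_pos

lemma Connected.inducedComponentCount_le_add_ge_le [Finite V] (hH : H.Connected) {f : V → ℕ}
    (hf : ∀ u v, H.Adj u v → f u ≤ f v + 1) (i : ℕ) :
    H.inducedComponentCount {v | f v ≤ i} + H.inducedComponentCount {v | i ≤ f v} ≤
      H.inducedComponentCount {v | f v = i} + 1 := by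
  have h := inducedComponentCount_add_le (H := H) (S := {v | f v ≤ i}) (T := {v | i ≤ f v})
    (fun u hu v hv huv => by
      simp only [Set.mem_sdiff, Set.mem_ofPred_eq] at hu hv
      have := hf v u huv.symm
      omega)
  have hinter : {v | f v ≤ i} ∩ {v | i ≤ f v} = {v | f v = i} := by
    ext v; simp only [Set.mem_inter_iff, Set.mem_ofPred_eq]; omega
  have hunion : {v | f v ≤ i} ∪ {v | i ≤ f v} = Set.univ := by
    ext v; simp only [Set.mem_union, Set.mem_ofPred_eq, Set.mem_univ, iff_true]; omega
  rwa [hinter, hunion, hH.inducedComponentCount_univ] at h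

noncomputable def levelCutRank (H : SimpleGraph V) (f : V → ℕ) (t : ℕ) : ℕ :=
  ∑ i ∈ Finset.range t,
    (H.inducedComponentCount {v | f v ≤ i} + H.inducedComponentCount {v | i < f v} - 1)

lemma le_levelCutRank [Finite V] {f : V → ℕ} {t : ℕ} (h0 : ∃ v, f v = 0)
    (ht : ∃ v, t ≤ f v) : t ≤ H.levelCutRank f t := by
  obtain ⟨v₀, hv₀⟩ := h0
  obtain ⟨v₁, hv₁⟩ := ht
  calc t = ∑ i ∈ range t, 1 := by simp
    _ ≤ _ := sum_le_sum fun i hi => by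
      have := one_le_inducedComponentCount (H := H) (S := {v | f v ≤ i})
        ⟨v₀, by simp [hv₀]⟩
      have := one_le_inducedComponentCount (H := H) (S := {v | i < f v})
        ⟨v₁, by simpa using (mem_range.mp hi).trans_le hv₁⟩
      omega

lemma Connected.levelCutRank_add_one_le [Finite V] (hH : H.Connected) {f : V → ℕ} {t : ℕ}
    (hf : ∀ u v, H.Adj u v → f u ≤ f v + 1) (h0 : ∃ v, f v = 0) (ht : ∀ v, f v ≤ t) :
    H.levelCutRank f t + 1 ≤ ∑ i ∈ range (t + 1), H.inducedComponentCount {v | f v = i} := by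
  obtain ⟨v₀, hv₀⟩ := h0
  have hlgc := hH.inducedComponentCount_le_add_ge_le hf
  have hsum : H.levelCutRank f t + 1 ≤
      ∑ i ∈ range t, H.inducedComponentCount {v | f v = i} +
        H.inducedComponentCount {v | t ≤ f v} :=
    sum_range_add_sub_one_add_one_le (fun i => H.inducedComponentCount {v | f v ≤ i})
      (fun i => H.inducedComponentCount {v | i ≤ f v})
      (fun i => H.inducedComponentCount {v | f v = i})
      (fun i => one_le_inducedComponentCount ⟨v₀, by simp [hv₀]⟩)
      (by simpa using hH.inducedComponentCount_univ) hlgc t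
  have hlast : H.inducedComponentCount {v | f v ≤ t} = 1 := by
    simpa [ht] using hH.inducedComponentCount_univ
  have := hlgc t
  rw [sum_range_succ]
  omega

end SimpleGraph

variable {V E : Type} [Fintype V] [Fintype E] [DecidableEq V] [DecidableEq E]

noncomputable def ncomp (G : Multigraph V E) (C : Set V) : ℕ :=
  Nat.card (G.adjG.induce C).ConnectedComponent

/-- `P : V → Fin s` encodes a generalized cut of `G`: an ordered partition of `V` into
`s ≥ 2` nonempty parts `V_0 < ⋯ < V_{s-1}` with all crossing edges of `G` between
consecutive parts. -/
def IsGenCut (G : Multigraph V E) {s : ℕ} (P : V → Fin s) : Prop :=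
  2 ≤ s ∧ Function.Surjective P ∧
    ∀ e : E, ((P (G.tail e) : ℕ) ≤ (P (G.head e) : ℕ) + 1 ∧
              (P (G.head e) : ℕ) ≤ (P (G.tail e) : ℕ) + 1)

/-- The rank `κ(𝔠) = Σ_{i=1}^{s-1} (l_i + r_i − 1)` of a generalized cut. -/
noncomputable def cutRank (G : Multigraph V E) {s : ℕ} (P : V → Fin s) : ℕ :=
  ∑ i ∈ Finset.range (s - 1),
    (ncomp G {v | (P v : ℕ) ≤ i} + ncomp G {v | i < (P v : ℕ)} - 1)

/-- for a generalized cut `𝔠` with ordered partition `V₁, …, V_s`,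
we have `s − 1 ≤ κ(𝔠) ≤ (Σ_j c_j) − 1`, where `c_j` is the number of connected
components of `G[V_j]`. -/
theorem stmt14 (G : Multigraph V E) (hG : G.Conn) {s : ℕ} (P : V → Fin s)
    (hP : IsGenCut G P) :
    s - 1 ≤ cutRank G P ∧
      cutRank G P ≤ (∑ j : Fin s, ncomp G {v | P v = j}) - 1 := by
  obtain ⟨hs, hsurj, hedge⟩ := hP
  obtain ⟨t, rfl⟩ : ∃ t, s = t + 1 := ⟨s - 1, by omega⟩
  have hlevel := G.le_add_one_of_adjG (f := fun v => (P v : ℕ)) hedge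
  have h0 : ∃ v, (P v : ℕ) = 0 := (hsurj 0).imp fun v hv => by simp [hv]
  have hrank : cutRank G P = G.adjG.levelCutRank (fun v => P v) t := rfl
  have hparts : ∑ j : Fin (t + 1), ncomp G {v | P v = j} =
      ∑ i ∈ range (t + 1), G.adjG.inducedComponentCount {v | (P v : ℕ) = i} := by
    rw [← Fin.sum_univ_eq_sum_range]
    simp only [Fin.ext_iff]
    rfl
  rw [hrank, hparts, Nat.add_sub_cancel]
  refine ⟨SimpleGraph.le_levelCutRank h0 ?_, Nat.le_sub_one_of_lt
    (hG.levelCutRank_add_one_le hlevel h0 fun v => Nat.lt_succ_iff.mp (P v).2)⟩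
  exact (hsurj (Fin.last t)).imp fun v hv => by simp [hv]
end
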